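/- arXiv:1804.08155 — 6 statements merged into one kernel-verified Lean document; each statement's English description precedes it below -/
import Mathlib

section
/- If X is a γ-HDX for some γ < 1, then X is a 3dγ-two-sided link expander: λ(A_r) ≤ 3(i+1)γ for every r ∈ X(i−1) with i ≤ d−1. -/
open Finset

noncomputable section

/-- A pure `d`-dimensional weighted simplicial complex on a finite vertex set `V`:
a nonempty collection of top faces, each of cardinality `d+1`, together with a
probability distribution on the top faces which is positive on them.  (Faces of
cardinality `j` correspond to faces of dimension `j-1`, i.e. of level `j-1`, in
the paper's indexing; the empty face has level `-1`.) -/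
structure WSC (V : Type) [DecidableEq V] [Fintype V] (d : ℕ) : Type where
  top : Finset (Finset V)
  top_nonempty : top.Nonempty
  pure : ∀ s ∈ top, s.card = d + 1
  w : Finset V → ℝ
  w_pos : ∀ s ∈ top, 0 < w s
  w_supp : ∀ s, s ∉ top → w s = 0
  w_sum : ∑ s ∈ top, w s = 1

namespace WSC

variable {V : Type} [DecidableEq V] [Fintype V] {d : ℕ} (X : WSC V d)

/-- The faces of cardinality `j`, i.e. the set `X(j-1)` in the paper's indexing. -/
def faces (j : ℕ) : Finset (Finset V) :=
  (Finset.univ : Finset V).powerset.filter (fun t => t.card = j ∧ ∃ s ∈ X.top, t ⊆ s)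

/-- All faces of the complex. -/
def allFaces : Finset (Finset V) :=
  (Finset.univ : Finset V).powerset.filter (fun t => ∃ s ∈ X.top, t ⊆ s)

/-- The induced distribution `Dist_{j-1}` on the faces of cardinality `j`:
choose a top face according to `w` and then a uniformly random subset of
cardinality `j` of it. -/
def dist (j : ℕ) (t : Finset V) : ℝ :=
  (∑ s ∈ X.top.filter (fun s => t ⊆ s), X.w s) / (d + 1).choose j

/-- The weighted inner product on the space `C^{j-1}` of functions on the faces
of cardinality `j`. -/
def ip (j : ℕ) (f g : Finset V → ℝ) : ℝ :=
  ∑ t ∈ X.faces j, X.dist j t * f t * g t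

/-- The up (averaging) operator `U_{j-1}` sending functions on cardinality-`j`
faces to functions on cardinality-`(j+1)` faces. -/
def up (_X : WSC V d) (j : ℕ) (g : Finset V → ℝ) : Finset V → ℝ :=
  fun s => (∑ x ∈ s, g (s.erase x)) / ((j : ℝ) + 1)

/-- The down (averaging) operator `D_{j-1}` sending functions on cardinality-`j`
faces to functions on cardinality-`(j-1)` faces. -/
def down (j : ℕ) (f : Finset V → ℝ) : Finset V → ℝ :=
  fun t => (∑ s ∈ (X.faces j).filter (fun s => t ⊆ s), X.dist j s * f s) /
    ((j : ℝ) * X.dist (j - 1) t)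

/-- `m`-fold iterate of the up operator, starting from cardinality `j`. -/
def upIter (X : WSC V d) (j : ℕ) : ℕ → (Finset V → ℝ) → (Finset V → ℝ)
  | 0, g => g
  | (m+1), g => X.up (j + m) (upIter X j m g)

/-- `ys s` is the indicator function of containing the face `s`. -/
def ys (s t : Finset V) : ℝ := if s ⊆ t then 1 else 0

/-- `ys s` viewed as a function on the top faces `X(d)` (zero elsewhere). -/
def ysRes (s : Finset V) : Finset V → ℝ :=
  fun r => if r ∈ X.faces (d + 1) ∧ s ⊆ r then 1 else 0

/-- `X` is proper: all the up operators `U_i`, `-1 ≤ i ≤ d-1`, have trivial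
kernel (as operators on functions supported on the faces). -/
def Proper : Prop :=
  ∀ j, j ≤ d → ∀ g : Finset V → ℝ,
    (∀ t, t ∉ X.faces j → g t = 0) →
    (∀ s ∈ X.faces (j + 1), X.up j g s = 0) →
    ∀ t, g t = 0

/-- `h` is a harmonic function at cardinality `j`, i.e. an element of
`H^{j-1} = ker D_{j-1}` (for `j = 0` this is all of `C^{-1}`). -/
def Harmonic (j : ℕ) (h : Finset V → ℝ) : Prop :=
  (∀ t, t ∉ X.faces j → h t = 0) ∧
  (1 ≤ j → ∀ t ∈ X.faces (j - 1), X.down j h t = 0)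

/-- The non-lazy upper random walk `M⁺_{j-1}` on functions on cardinality-`j`
faces: go up to a random cardinality-`(j+1)` face and back down to a distinct
cardinality-`j` face. -/
def Mplus (j : ℕ) (f : Finset V → ℝ) : Finset V → ℝ :=
  fun t => ∑ s ∈ (X.faces (j + 1)).filter (fun s => t ⊆ s),
    (X.dist (j + 1) s / (((j : ℝ) + 1) * X.dist j t)) *
      ((∑ x ∈ t, f (s.erase x)) / (j : ℝ))

/-- The lower random walk `U_{j-2} D_{j-1}` on functions on cardinality-`j` faces. -/
def lower (j : ℕ) (f : Finset V → ℝ) : Finset V → ℝ :=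
  fun t => X.up (j - 1) (X.down j f) t

/-- `X` is a `γ`-high-dimensional expander: `‖M⁺_j - U_{j-1} D_j‖ ≤ γ` for all
paper levels `0 ≤ j ≤ d-1`, where the operator norm is with respect to the
weighted `L²` structure, expressed via quadratic forms. -/
def IsHDX (γ : ℝ) : Prop :=
  ∀ j, j + 1 ≤ d → ∀ f : Finset V → ℝ,
    X.ip (j + 1) (fun t => X.Mplus (j + 1) f t - X.lower (j + 1) f t)
      (fun t => X.Mplus (j + 1) f t - X.lower (j + 1) f t)
    ≤ γ ^ 2 * X.ip (j + 1) f f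

/-- The probability that a random cardinality-`m` face contains `r`. -/
def distAbove (m : ℕ) (r : Finset V) : ℝ :=
  ∑ s ∈ (X.faces m).filter (fun s => r ⊆ s), X.dist m s

/-- Expectation of a vertex function of the link of `r` under the link's vertex
distribution. -/
def linkEv (r : Finset V) (f : V → ℝ) : ℝ :=
  ∑ s ∈ (X.faces (r.card + 1)).filter (fun s => r ⊆ s),
    (X.dist (r.card + 1) s / X.distAbove (r.card + 1) r) * ∑ x ∈ s \ r, f x

/-- Expectation of `f(x) · g(y)` over a uniformly oriented random edge `(x,y)`
of the underlying graph of the link of `r`, i.e. the quadratic form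
`⟨f, A_r g⟩` of the link's adjacency operator. -/
def linkEe (r : Finset V) (f g : V → ℝ) : ℝ :=
  ∑ s ∈ (X.faces (r.card + 2)).filter (fun s => r ⊆ s),
    (X.dist (r.card + 2) s / X.distAbove (r.card + 2) r) *
      ((∑ x ∈ s \ r, ∑ y ∈ (s \ r).erase x, f x * g y) / 2)

/-- The two-sided spectral bound `λ(A_r) ≤ γ` for the underlying graph of the
link of `r`, in its equivalent quadratic-form formulation
`|⟨f, A_r g⟩ - E[f]·E[g]| ≤ γ‖f‖‖g‖`. -/
def LinkBound (r : Finset V) (γ : ℝ) : Prop :=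
  ∀ f g : V → ℝ,
    |X.linkEe r f g - X.linkEv r f * X.linkEv r g| ≤
      γ * Real.sqrt (X.linkEv r (fun x => f x ^ 2)) *
        Real.sqrt (X.linkEv r (fun x => g x ^ 2))

/-- `X` is a `γ`-two-sided link expander: every link (with a nonempty underlying
graph) satisfies `λ(A_r) ≤ γ`. -/
def TwoSidedLinkExpander (γ : ℝ) : Prop :=
  ∀ r ∈ X.allFaces, r.card + 2 ≤ d + 1 → X.LinkBound r γ


lemma w_nonneg (s : Finset V) : 0 ≤ X.w s := by
  by_cases h : s ∈ X.top
  · exact (X.w_pos s h).le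
  · rw [X.w_supp s h]

lemma mem_faces_iff {j : ℕ} {t : Finset V} :
    t ∈ X.faces j ↔ t.card = j ∧ ∃ s ∈ X.top, t ⊆ s := by
  simp [faces]

lemma subface {j : ℕ} {t u : Finset V} (ht : t ∈ X.faces j) (hu : u ⊆ t) :
    u ∈ X.faces u.card := by
  obtain ⟨-, s, hs, hts⟩ := X.mem_faces_iff.mp ht
  exact X.mem_faces_iff.mpr ⟨rfl, s, hs, hu.trans hts⟩

lemma dist_nonneg (j : ℕ) (t : Finset V) : 0 ≤ X.dist j t :=
  div_nonneg (Finset.sum_nonneg fun s _ => X.w_nonneg s) (by positivity)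

lemma card_le_of_face {j : ℕ} {t : Finset V} (ht : t ∈ X.faces j) : j ≤ d + 1 := by
  obtain ⟨hc, s, hs, hts⟩ := X.mem_faces_iff.mp ht
  calc j = t.card := hc.symm
    _ ≤ s.card := Finset.card_le_card hts
    _ = d + 1 := X.pure s hs

lemma dist_pos {j : ℕ} {t : Finset V} (ht : t ∈ X.faces j) : 0 < X.dist j t := by
  obtain ⟨hc, s, hs, hts⟩ := X.mem_faces_iff.mp ht
  apply div_pos
  · exact Finset.sum_pos' (fun u _ => X.w_nonneg u)
      ⟨s, Finset.mem_filter.mpr ⟨hs, hts⟩, X.w_pos s hs⟩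
  · have := Nat.choose_pos (X.card_le_of_face ht)
    exact_mod_cast this

lemma dist_eq_zero {j : ℕ} {t : Finset V} (hc : t.card = j) (ht : t ∉ X.faces j) :
    X.dist j t = 0 := by
  have : X.top.filter (fun s => t ⊆ s) = ∅ := by
    rw [Finset.filter_eq_empty_iff]
    intro s hs hts
    exact ht (X.mem_faces_iff.mpr ⟨hc, s, hs, hts⟩)
  rw [dist, this, Finset.sum_empty, zero_div]

lemma face_insert_form {k : ℕ} {r s : Finset V} (hr : r.card = k) (hs : s.card = k + 1)
    (hrs : r ⊆ s) : ∃ x, x ∉ r ∧ s = insert x r ∧ s \ r = {x} := by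
  have hcard : (s \ r).card = 1 := by
    rw [Finset.card_sdiff_of_subset hrs, hs, hr, Nat.add_sub_cancel_left]
  obtain ⟨x, hx⟩ := Finset.card_eq_one.mp hcard
  have hxm : x ∈ s \ r := by rw [hx]; exact Finset.mem_singleton_self x
  rw [Finset.mem_sdiff] at hxm
  have hins : insert x r ⊆ s := Finset.insert_subset hxm.1 hrs
  have hcc : s.card ≤ (insert x r).card := by
    rw [Finset.card_insert_of_notMem hxm.2, hr, hs]
  exact ⟨x, hxm.2, (Finset.eq_of_subset_of_card_le hins hcc).symm, hx⟩

lemma insert_sdiff_self' {r : Finset V} {x : V} (hx : x ∉ r) :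
    (insert x r) \ r = {x} := by
  ext y
  simp only [Finset.mem_sdiff, Finset.mem_insert, Finset.mem_singleton]
  constructor
  · rintro ⟨(rfl | hy), hyr⟩
    · rfl
    · exact absurd hy hyr
  · rintro rfl; exact ⟨Or.inl rfl, hx⟩

lemma erase_sdiff_comm' (s r : Finset V) (x : V) :
    (s.erase x) \ r = (s \ r).erase x := by
  ext y
  simp only [Finset.mem_sdiff, Finset.mem_erase]
  tauto

/-- reindexing a sum over supersets of `t₀` with one extra element -/
lemma sum_card_succ (t₀ : Finset V) (A : Finset (Finset V))
    (hA : ∀ t ∈ A, t₀ ⊆ t ∧ t.card = t₀.card + 1) (h : Finset V → ℝ) :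
    ∑ t ∈ A, h t =
      ∑ x ∈ Finset.univ, if x ∉ t₀ ∧ insert x t₀ ∈ A then h (insert x t₀) else 0 := by
  rw [← Finset.sum_filter]
  refine (Finset.sum_bij (fun x hx => insert x t₀) ?_ ?_ ?_ ?_).symm
  · intro x hx
    exact (Finset.mem_filter.mp hx).2.2
  · intro x hx y hy hxy
    have hx' := (Finset.mem_filter.mp hx).2.1
    have hy' := (Finset.mem_filter.mp hy).2.1
    have hxy' : insert x t₀ = insert y t₀ := hxy
    have : x ∈ insert y t₀ := hxy' ▸ Finset.mem_insert_self x t₀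
    rcases Finset.mem_insert.mp this with h1 | h1
    · exact h1
    · exact absurd h1 hx'
  · intro t ht
    obtain ⟨hsub, hcard⟩ := hA t ht
    obtain ⟨x, hx, heq, -⟩ := face_insert_form rfl hcard hsub
    exact ⟨x, Finset.mem_filter.mpr ⟨Finset.mem_univ x, hx, heq ▸ ht⟩, heq.symm⟩
  · intro x hx
    rfl

lemma abs_sum_mul_le {α : Type} (s : Finset α) (u v : α → ℝ) :
    |∑ a ∈ s, u a * v a| ≤
      Real.sqrt (∑ a ∈ s, u a ^ 2) * Real.sqrt (∑ a ∈ s, v a ^ 2) := by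
  rw [abs_le]
  constructor
  · have h := Real.sum_mul_le_sqrt_mul_sqrt s u (fun a => - v a)
    simp only [mul_neg, Finset.sum_neg_distrib, neg_sq] at h
    linarith
  · exact Real.sum_mul_le_sqrt_mul_sqrt s u v

lemma weighted_CS {α : Type} (s : Finset α) (w f g : α → ℝ) (hw : ∀ a ∈ s, 0 ≤ w a) :
    |∑ a ∈ s, w a * f a * g a| ≤
      Real.sqrt (∑ a ∈ s, w a * f a * f a) * Real.sqrt (∑ a ∈ s, w a * g a * g a) := by
  have key : ∀ (f g : α → ℝ), ∑ a ∈ s, w a * f a * g a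
      = ∑ a ∈ s, (Real.sqrt (w a) * f a) * (Real.sqrt (w a) * g a) := by
    intro f g
    refine Finset.sum_congr rfl fun a ha => ?_
    have h1 : (Real.sqrt (w a) * f a) * (Real.sqrt (w a) * g a)
        = (Real.sqrt (w a) * Real.sqrt (w a)) * (f a * g a) := by ring
    rw [h1, Real.mul_self_sqrt (hw a ha)]
    ring
  rw [key f g, key f f, key g g]
  have h2 : ∀ (f : α → ℝ), ∑ a ∈ s, (Real.sqrt (w a) * f a) * (Real.sqrt (w a) * f a)
      = ∑ a ∈ s, (Real.sqrt (w a) * f a) ^ 2 := by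
    intro f
    refine Finset.sum_congr rfl fun a ha => (pow_two _).symm
  rw [h2 f, h2 g]
  exact abs_sum_mul_le s _ _

lemma key_sum {j : ℕ} (hj : j + 1 ≤ d + 1) {t : Finset V} (ht : t.card = j) :
    ∑ s ∈ (X.faces (j+1)).filter (fun s => t ⊆ s), X.dist (j+1) s
      = ((j : ℝ) + 1) * X.dist j t := by
  have hA : ∀ s ∈ (X.faces (j+1)).filter (fun s => t ⊆ s), t ⊆ s ∧ s.card = t.card + 1 := by
    intro s hs
    obtain ⟨hsf, hts⟩ := Finset.mem_filter.mp hs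
    exact ⟨hts, by rw [ht, (X.mem_faces_iff.mp hsf).1]⟩
  rw [sum_card_succ t _ hA]
  have step1 : ∀ x ∈ (Finset.univ : Finset V),
      (if x ∉ t ∧ insert x t ∈ (X.faces (j+1)).filter (fun s => t ⊆ s)
        then X.dist (j+1) (insert x t) else 0)
      = (∑ T ∈ X.top, if x ∉ t ∧ insert x t ⊆ T then X.w T else 0)
          / ((d+1).choose (j+1) : ℝ) := by
    intro x _
    by_cases hx : x ∉ t
    · by_cases hf : insert x t ∈ X.faces (j+1)
      · rw [if_pos ⟨hx, Finset.mem_filter.mpr ⟨hf, Finset.subset_insert x t⟩⟩, dist,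
          Finset.sum_filter]
        congr 1
        refine Finset.sum_congr rfl fun T _ => ?_
        simp [hx]
      · have h0 : X.dist (j+1) (insert x t) = 0 :=
          X.dist_eq_zero (by rw [Finset.card_insert_of_notMem hx, ht]) hf
        rw [if_neg (by simp [Finset.mem_filter, hf]), eq_comm, div_eq_zero_iff]
        left
        rw [Finset.sum_eq_zero]
        intro T hT
        rw [if_neg]
        rintro ⟨-, hsub⟩
        exact hf (X.mem_faces_iff.mpr
          ⟨by rw [Finset.card_insert_of_notMem hx, ht], T, hT, hsub⟩)
    · rw [if_neg (by tauto), eq_comm, div_eq_zero_iff]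
      left
      rw [Finset.sum_eq_zero]
      intro T hT
      rw [if_neg (by tauto)]
  rw [Finset.sum_congr rfl step1, ← Finset.sum_div, Finset.sum_comm]
  have step2 : ∀ T ∈ X.top,
      (∑ x ∈ (Finset.univ : Finset V), if x ∉ t ∧ insert x t ⊆ T then X.w T else 0)
      = (if t ⊆ T then ((d + 1 - j : ℕ) : ℝ) * X.w T else 0) := by
    intro T hT
    by_cases htT : t ⊆ T
    · rw [if_pos htT]
      have hcond : ∀ x ∈ (Finset.univ : Finset V),
          (if x ∉ t ∧ insert x t ⊆ T then X.w T else 0)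
          = (if x ∈ T \ t then X.w T else 0) := by
        intro x _
        congr 1
        simp only [Finset.insert_subset_iff, Finset.mem_sdiff, eq_iff_iff]
        tauto
      rw [Finset.sum_congr rfl hcond, Finset.sum_ite_mem, Finset.univ_inter,
        Finset.sum_const, nsmul_eq_mul, Finset.card_sdiff_of_subset htT, X.pure T hT, ht]
    · rw [if_neg htT, Finset.sum_eq_zero]
      intro x _
      rw [if_neg]
      rintro ⟨-, hsub⟩
      exact htT ((Finset.subset_insert x t).trans hsub)
  rw [Finset.sum_congr rfl step2, ← Finset.sum_filter, ← Finset.mul_sum]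
  rw [dist]
  have hid : ((d+1).choose (j+1) : ℝ) * ((j : ℝ) + 1)
      = ((d+1).choose j : ℝ) * ((d + 1 - j : ℕ) : ℝ) := by
    have h := Nat.choose_succ_right_eq (d+1) j
    have : (((d+1).choose (j+1) * (j+1) : ℕ) : ℝ) = (((d+1).choose j * (d + 1 - j) : ℕ) : ℝ) := by
      exact_mod_cast congrArg Nat.cast h
    push_cast at this
    linarith
  have hN1 : (0:ℝ) < ((d+1).choose (j+1) : ℝ) := by
    exact_mod_cast Nat.choose_pos hj
  have hN0 : (0:ℝ) < ((d+1).choose j : ℝ) := by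
    exact_mod_cast Nat.choose_pos (le_trans (Nat.le_succ j) hj)
  field_simp
  linear_combination (-(∑ T ∈ X.top.filter (fun T => t ⊆ T), X.w T)) * hid

lemma ip_sub (j : ℕ) (F h1 h2 : Finset V → ℝ) :
    X.ip j F (fun t => h1 t - h2 t) = X.ip j F h1 - X.ip j F h2 := by
  rw [ip, ip, ip, ← Finset.sum_sub_distrib]
  exact Finset.sum_congr rfl fun t _ => by ring

lemma ip_abs_le (j : ℕ) (F h : Finset V → ℝ) :
    |X.ip j F h| ≤ Real.sqrt (X.ip j F F) * Real.sqrt (X.ip j h h) :=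
  weighted_CS _ _ _ _ (fun t _ => X.dist_nonneg j t)

lemma claimA {γ : ℝ} (hγ0 : 0 ≤ γ) (hX : X.IsHDX γ) {j : ℕ} (hj : j + 1 ≤ d)
    {q : Finset V} (hq : q ∈ X.faces (j+1)) :
    ∑ y ∈ q, (X.dist (j+1) q)^2 / (((j:ℝ)+1)^2 * X.dist j (q.erase y))
      ≤ γ * X.dist (j+1) q := by
  classical
  set Fq : Finset V → ℝ := fun t => if t = q then 1 else 0 with hFq
  have hip : ∀ h : Finset V → ℝ, X.ip (j+1) Fq h = X.dist (j+1) q * h q := by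
    intro h
    rw [ip, Finset.sum_eq_single q]
    · simp [hFq]
    · intro t _ htq; simp [hFq, htq]
    · intro habs; exact absurd hq habs
  have hcard : q.card = j + 1 := (X.mem_faces_iff.mp hq).1
  have hM : X.Mplus (j+1) Fq q = 0 := by
    rw [Mplus]
    refine Finset.sum_eq_zero fun s hs => ?_
    have h0 : ∑ x ∈ q, Fq (s.erase x) = 0 := by
      refine Finset.sum_eq_zero fun x hx => ?_
      have hne : s.erase x ≠ q := by
        intro heq
        have : x ∈ s.erase x := heq ▸ hx
        exact (Finset.notMem_erase x s) this
      simp [hFq, hne]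
    rw [h0]
    simp
  have hL : X.dist (j+1) q * X.lower (j+1) Fq q
      = ∑ y ∈ q, (X.dist (j+1) q)^2 / (((j:ℝ)+1)^2 * X.dist j (q.erase y)) := by
    rw [lower, up, Nat.add_sub_cancel, Finset.sum_div, Finset.mul_sum]
    refine Finset.sum_congr rfl fun y hy => ?_
    rw [down, Nat.add_sub_cancel]
    have hqe : q.erase y ⊆ q := Finset.erase_subset y q
    have hin : ∑ s ∈ (X.faces (j+1)).filter (fun s => q.erase y ⊆ s), X.dist (j+1) s * Fq s
        = X.dist (j+1) q := by
      rw [Finset.sum_eq_single q]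
      · simp [hFq]
      · intro t _ htq; simp [hFq, htq]
      · intro habs; exact absurd (Finset.mem_filter.mpr ⟨hq, hqe⟩) habs
    rw [hin]
    have hface : q.erase y ∈ X.faces j := by
      have := X.subface hq hqe
      rwa [Finset.card_erase_of_mem hy, hcard, Nat.add_sub_cancel] at this
    have hdy : X.dist j (q.erase y) ≠ 0 := (X.dist_pos hface).ne'
    have hj1 : ((j:ℝ) + 1) ≠ 0 := by positivity
    push_cast
    field_simp
  have hdq : 0 < X.dist (j+1) q := X.dist_pos hq
  have hipFF : X.ip (j+1) Fq Fq = X.dist (j+1) q := by rw [hip]; simp [hFq]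
  have hXq := hX j hj Fq
  rw [hipFF] at hXq
  calc ∑ y ∈ q, (X.dist (j+1) q)^2 / (((j:ℝ)+1)^2 * X.dist j (q.erase y))
      = X.dist (j+1) q * X.lower (j+1) Fq q := hL.symm
    _ = - X.ip (j+1) Fq (fun t => X.Mplus (j+1) Fq t - X.lower (j+1) Fq t) := by
        rw [hip, hM]; ring
    _ ≤ |X.ip (j+1) Fq (fun t => X.Mplus (j+1) Fq t - X.lower (j+1) Fq t)| :=
        neg_le_abs _
    _ ≤ Real.sqrt (X.ip (j+1) Fq Fq) *
        Real.sqrt (X.ip (j+1) (fun t => X.Mplus (j+1) Fq t - X.lower (j+1) Fq t)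
          (fun t => X.Mplus (j+1) Fq t - X.lower (j+1) Fq t)) := X.ip_abs_le _ _ _
    _ ≤ Real.sqrt (X.dist (j+1) q) * Real.sqrt (γ^2 * X.dist (j+1) q) := by
        rw [hipFF]
        exact mul_le_mul_of_nonneg_left (Real.sqrt_le_sqrt hXq) (Real.sqrt_nonneg _)
    _ = γ * X.dist (j+1) q := by
        rw [Real.sqrt_mul (sq_nonneg γ), Real.sqrt_sq hγ0]
        rw [mul_comm γ (Real.sqrt (X.dist (j+1) q)), ← mul_assoc,
          Real.mul_self_sqrt hdq.le]
        ring

/-- localization of a link-vertex function to faces of cardinality `r.card + 1` -/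
def loc (r : Finset V) (f : V → ℝ) : Finset V → ℝ :=
  fun s => if s ∈ X.faces (r.card + 1) ∧ r ⊆ s then ∑ x ∈ s \ r, f x else 0

lemma ip_loc (r : Finset V) (f : V → ℝ) (h : Finset V → ℝ) :
    X.ip (r.card+1) (X.loc r f) h
      = ∑ x ∈ Finset.univ, (if x ∉ r ∧ insert x r ∈ X.faces (r.card+1)
          then X.dist (r.card+1) (insert x r) * f x * h (insert x r) else 0) := by
  rw [ip]
  have stepA : ∀ t ∈ X.faces (r.card+1),
      X.dist (r.card+1) t * X.loc r f t * h t
        = if r ⊆ t then X.dist (r.card+1) t * (∑ x ∈ t \ r, f x) * h t else 0 := by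
    intro t ht
    by_cases hrt : r ⊆ t
    · rw [if_pos hrt, loc, if_pos ⟨ht, hrt⟩]
    · rw [if_neg hrt, loc, if_neg (by tauto), mul_zero, zero_mul]
  rw [Finset.sum_congr rfl stepA, ← Finset.sum_filter]
  have hA : ∀ t ∈ (X.faces (r.card+1)).filter (fun t => r ⊆ t), r ⊆ t ∧ t.card = r.card + 1 := by
    intro t ht
    obtain ⟨htf, hrt⟩ := Finset.mem_filter.mp ht
    exact ⟨hrt, (X.mem_faces_iff.mp htf).1⟩
  rw [sum_card_succ r _ hA]
  refine Finset.sum_congr rfl fun x _ => ?_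
  by_cases hx : x ∉ r
  · by_cases hf : insert x r ∈ X.faces (r.card+1)
    · rw [if_pos ⟨hx, Finset.mem_filter.mpr ⟨hf, Finset.subset_insert x r⟩⟩, if_pos ⟨hx, hf⟩,
        insert_sdiff_self' hx, Finset.sum_singleton]
    · rw [if_neg (by simp [Finset.mem_filter, hf]), if_neg (by tauto)]
  · rw [if_neg (by tauto), if_neg (by tauto)]

lemma sumF1 {r : Finset V} (hr : r ∈ X.faces r.card) (hkd : r.card + 1 ≤ d + 1)
    (φ : V → ℝ) :
    ∑ s ∈ (X.faces (r.card+1)).filter (fun s => r ⊆ s),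
        X.dist (r.card+1) s * (∑ x ∈ s \ r, φ x)
      = ((r.card:ℝ)+1) * X.dist r.card r * X.linkEv r φ := by
  have hD1 : X.distAbove (r.card+1) r = ((r.card:ℝ)+1) * X.dist r.card r :=
    X.key_sum hkd rfl
  have hD1pos : 0 < X.distAbove (r.card+1) r := by
    rw [hD1]
    have := X.dist_pos hr
    positivity
  rw [← hD1, linkEv, Finset.mul_sum]
  refine Finset.sum_congr rfl fun s _ => ?_
  field_simp

lemma sum_loc_eval {r : Finset V} (hr : r ∈ X.faces r.card) (hkd : r.card + 1 ≤ d + 1)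
    (φ : V → ℝ) :
    ∑ x ∈ Finset.univ, (if x ∉ r ∧ insert x r ∈ X.faces (r.card+1)
        then X.dist (r.card+1) (insert x r) * φ x else 0)
      = ((r.card:ℝ)+1) * X.dist r.card r * X.linkEv r φ := by
  rw [← X.sumF1 hr hkd φ]
  have hA : ∀ t ∈ (X.faces (r.card+1)).filter (fun t => r ⊆ t), r ⊆ t ∧ t.card = r.card + 1 := by
    intro t ht
    obtain ⟨htf, hrt⟩ := Finset.mem_filter.mp ht
    exact ⟨hrt, (X.mem_faces_iff.mp htf).1⟩
  rw [sum_card_succ r _ hA]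
  refine Finset.sum_congr rfl fun x _ => ?_
  by_cases hx : x ∉ r
  · by_cases hf : insert x r ∈ X.faces (r.card+1)
    · rw [if_pos ⟨hx, hf⟩, if_pos ⟨hx, Finset.mem_filter.mpr ⟨hf, Finset.subset_insert x r⟩⟩,
        insert_sdiff_self' hx, Finset.sum_singleton]
    · rw [if_neg (by tauto), if_neg (by simp [Finset.mem_filter, hf])]
  · rw [if_neg (by tauto), if_neg (by tauto)]

lemma ip_loc_self {r : Finset V} (hr : r ∈ X.faces r.card) (hkd : r.card + 1 ≤ d + 1)
    (f : V → ℝ) :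
    X.ip (r.card+1) (X.loc r f) (X.loc r f)
      = ((r.card:ℝ)+1) * X.dist r.card r * X.linkEv r (fun x => f x ^ 2) := by
  rw [X.ip_loc r f, ← X.sum_loc_eval hr hkd (fun x => f x ^ 2)]
  refine Finset.sum_congr rfl fun x _ => ?_
  by_cases hc : x ∉ r ∧ insert x r ∈ X.faces (r.card+1)
  · rw [if_pos hc, if_pos hc, loc, if_pos ⟨hc.2, Finset.subset_insert x r⟩,
      insert_sdiff_self' hc.1, Finset.sum_singleton]
    ring
  · rw [if_neg hc, if_neg hc]

lemma distAbove_two {r : Finset V} (hr : r ∈ X.faces r.card) (hkd : r.card + 2 ≤ d + 1) :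
    2 * X.distAbove (r.card + 2) r
      = ((r.card:ℝ)+2) * (((r.card:ℝ)+1) * X.dist r.card r) := by
  have hD1 : X.distAbove (r.card+1) r = ((r.card:ℝ)+1) * X.dist r.card r :=
    X.key_sum (le_trans (Nat.le_succ _) hkd) rfl
  have hS : ∑ t ∈ (X.faces (r.card+1)).filter (fun t => r ⊆ t),
      (∑ s ∈ (X.faces (r.card+2)).filter (fun s => t ⊆ s), X.dist (r.card+2) s)
      = ((r.card:ℝ)+2) * (((r.card:ℝ)+1) * X.dist r.card r) := by
    have step : ∀ t ∈ (X.faces (r.card+1)).filter (fun t => r ⊆ t),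
        (∑ s ∈ (X.faces (r.card+2)).filter (fun s => t ⊆ s), X.dist (r.card+2) s)
          = ((r.card:ℝ)+1+1) * X.dist (r.card+1) t := by
      intro t ht
      have htc : t.card = r.card + 1 := (X.mem_faces_iff.mp (Finset.mem_filter.mp ht).1).1
      have := X.key_sum (j := r.card+1) hkd htc
      push_cast at this ⊢
      convert this using 2
    rw [Finset.sum_congr rfl step, ← Finset.mul_sum, ← hD1, distAbove]
    push_cast
    ring
  rw [← hS]
  -- now swap the double sum and count
  have swap : ∑ t ∈ (X.faces (r.card+1)).filter (fun t => r ⊆ t),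
      (∑ s ∈ (X.faces (r.card+2)).filter (fun s => t ⊆ s), X.dist (r.card+2) s)
      = ∑ s ∈ X.faces (r.card+2),
          (∑ t ∈ (X.faces (r.card+1)).filter (fun t => r ⊆ t),
            if t ⊆ s then X.dist (r.card+2) s else 0) := by
    rw [Finset.sum_comm]
    refine Finset.sum_congr rfl fun t _ => ?_
    rw [Finset.sum_filter]
  rw [swap]
  have count : ∀ s ∈ X.faces (r.card+2),
      (∑ t ∈ (X.faces (r.card+1)).filter (fun t => r ⊆ t),
          if t ⊆ s then X.dist (r.card+2) s else 0)
        = if r ⊆ s then 2 * X.dist (r.card+2) s else 0 := by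
    intro s hs
    have hsc : s.card = r.card + 2 := (X.mem_faces_iff.mp hs).1
    by_cases hrs : r ⊆ s
    · rw [if_pos hrs]
      have hA : ∀ t ∈ (X.faces (r.card+1)).filter (fun t => r ⊆ t),
          r ⊆ t ∧ t.card = r.card + 1 := by
        intro t ht
        obtain ⟨htf, hrt⟩ := Finset.mem_filter.mp ht
        exact ⟨hrt, (X.mem_faces_iff.mp htf).1⟩
      rw [sum_card_succ r _ hA]
      have conv : ∀ x ∈ (Finset.univ : Finset V),
          (if x ∉ r ∧ insert x r ∈ (X.faces (r.card+1)).filter (fun t => r ⊆ t)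
            then (if insert x r ⊆ s then X.dist (r.card+2) s else 0) else 0)
          = if x ∈ s \ r then X.dist (r.card+2) s else 0 := by
        intro x _
        by_cases hxs : x ∈ s \ r
        · obtain ⟨hxs1, hxs2⟩ := Finset.mem_sdiff.mp hxs
          have hsub : insert x r ⊆ s := Finset.insert_subset hxs1 hrs
          have hface : insert x r ∈ X.faces (r.card+1) := by
            have := X.subface hs hsub
            rwa [Finset.card_insert_of_notMem hxs2] at this
          rw [if_pos ⟨hxs2, Finset.mem_filter.mpr ⟨hface, Finset.subset_insert x r⟩⟩,
            if_pos hsub, if_pos hxs]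
        · rw [if_neg hxs]
          by_cases hc : x ∉ r ∧ insert x r ∈ (X.faces (r.card+1)).filter (fun t => r ⊆ t)
          · rw [if_pos hc, if_neg]
            intro hsub
            exact hxs (Finset.mem_sdiff.mpr ⟨hsub (Finset.mem_insert_self x r), hc.1⟩)
          · rw [if_neg hc]
      rw [Finset.sum_congr rfl conv, Finset.sum_ite_mem, Finset.univ_inter,
        Finset.sum_const, nsmul_eq_mul, Finset.card_sdiff_of_subset hrs, hsc]
      norm_num
    · rw [if_neg hrs, Finset.sum_eq_zero]
      intro t ht
      obtain ⟨-, hrt⟩ := Finset.mem_filter.mp ht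
      rw [if_neg]
      intro hts
      exact hrs (hrt.trans hts)
  rw [Finset.sum_congr rfl count, ← Finset.sum_filter, ← Finset.mul_sum, distAbove]

lemma sum_dist_loc (r : Finset V) (φ : V → ℝ) :
    ∑ s ∈ (X.faces (r.card+1)).filter (fun s => r ⊆ s),
        X.dist (r.card+1) s * X.loc r φ s
      = ∑ s ∈ (X.faces (r.card+1)).filter (fun s => r ⊆ s),
          X.dist (r.card+1) s * (∑ x ∈ s \ r, φ x) := by
  refine Finset.sum_congr rfl fun s hs => ?_
  obtain ⟨hsf, hrs⟩ := Finset.mem_filter.mp hs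
  rw [loc, if_pos ⟨hsf, hrs⟩]

lemma down_loc_apex {r : Finset V} (hr : r ∈ X.faces r.card) (hkd : r.card + 1 ≤ d + 1)
    (g : V → ℝ) :
    X.down (r.card+1) (X.loc r g) r = X.linkEv r g := by
  rw [down, Nat.add_sub_cancel, X.sum_dist_loc r g, X.sumF1 hr hkd g]
  have hdr : 0 < X.dist r.card r := X.dist_pos hr
  have h1 : ((r.card:ℝ)+1) ≠ 0 := by positivity
  push_cast
  field_simp

lemma down_loc_side {r : Finset V} {x : V} {y : V} (hx : x ∉ r) (hy : y ∈ r)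
    (hfc : insert x r ∈ X.faces (r.card+1)) (g : V → ℝ) :
    X.down (r.card+1) (X.loc r g) ((insert x r).erase y)
      = X.dist (r.card+1) (insert x r) * g x
        / ((((r.card:ℝ))+1) * X.dist r.card ((insert x r).erase y)) := by
  set t := insert x r with hT
  have hxy : x ≠ y := fun h => hx (h ▸ hy)
  have hsingle : ∑ s ∈ (X.faces (r.card+1)).filter (fun s => t.erase y ⊆ s),
      X.dist (r.card+1) s * X.loc r g s = X.dist (r.card+1) t * g x := by
    rw [Finset.sum_eq_single t]
    · rw [loc, if_pos ⟨hfc, Finset.subset_insert x r⟩, hT, insert_sdiff_self' hx,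
        Finset.sum_singleton]
    · intro s hsmem hst
      obtain ⟨hsf, hes⟩ := Finset.mem_filter.mp hsmem
      rw [loc]
      by_cases hc : s ∈ X.faces (r.card+1) ∧ r ⊆ s
      · exfalso
        apply hst
        have hxt : x ∈ t.erase y := Finset.mem_erase.mpr ⟨hxy, Finset.mem_insert_self x r⟩
        have hts : t ⊆ s := by
          rw [hT]
        -- insert x r ⊆ s
          exact Finset.insert_subset (hes hxt) hc.2
        have hcards : s.card ≤ t.card := by
          rw [(X.mem_faces_iff.mp hsf).1, (X.mem_faces_iff.mp hfc).1]
        exact (Finset.eq_of_subset_of_card_le hts hcards).symm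
      · rw [if_neg hc, mul_zero]
    · intro habs
      exact absurd (Finset.mem_filter.mpr ⟨hfc, Finset.erase_subset y t⟩) habs
  rw [down, Nat.add_sub_cancel, hsingle]
  push_cast
  ring

lemma ip_loc_lower {r : Finset V} (hr : r ∈ X.faces r.card) (hkd : r.card + 1 ≤ d)
    (f g : V → ℝ) :
    X.ip (r.card+1) (X.loc r f) (X.lower (r.card+1) (X.loc r g))
      = X.dist r.card r * (X.linkEv r f * X.linkEv r g)
        + ∑ x ∈ Finset.univ, (if x ∉ r ∧ insert x r ∈ X.faces (r.card+1)
            then (∑ y ∈ r, (X.dist (r.card+1) (insert x r))^2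
                / (((r.card:ℝ)+1)^2 * X.dist r.card ((insert x r).erase y)))
              * f x * g x
            else 0) := by
  set k := r.card with hk
  have hkd1 : k + 1 ≤ d + 1 := le_trans hkd (Nat.le_succ d)
  have hdr : 0 < X.dist k r := X.dist_pos hr
  have hc1 : ((k:ℝ)+1) ≠ 0 := by positivity
  rw [X.ip_loc r f]
  have main : ∀ x ∈ (Finset.univ : Finset V),
      (if x ∉ r ∧ insert x r ∈ X.faces (k+1)
        then X.dist (k+1) (insert x r) * f x
          * X.lower (k+1) (X.loc r g) (insert x r) else 0)
      = (if x ∉ r ∧ insert x r ∈ X.faces (k+1)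
          then X.dist (k+1) (insert x r) * f x else 0) * (X.linkEv r g / ((k:ℝ)+1))
        + (if x ∉ r ∧ insert x r ∈ X.faces (k+1)
          then (∑ y ∈ r, (X.dist (k+1) (insert x r))^2
              / (((k:ℝ)+1)^2 * X.dist k ((insert x r).erase y))) * f x * g x else 0) := by
    intro x _
    by_cases hc : x ∉ r ∧ insert x r ∈ X.faces (k+1)
    · rw [if_pos hc, if_pos hc, if_pos hc]
      obtain ⟨hx, hfc⟩ := hc
      have hLG : X.lower (k+1) (X.loc r g) (insert x r)
          = (X.linkEv r g
              + ∑ y ∈ r, X.dist (k+1) (insert x r) * g x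
                  / (((k:ℝ)+1) * X.dist k ((insert x r).erase y))) / ((k:ℝ)+1) := by
        rw [lower, Nat.add_sub_cancel, up, Finset.sum_insert hx, Finset.erase_insert hx,
          X.down_loc_apex hr hkd1 g]
        congr 2
        refine Finset.sum_congr rfl fun y hy => ?_
        have heq : (insert x r).erase y = insert x (r.erase y) := by
          ext z
          simp only [Finset.mem_erase, Finset.mem_insert]
          constructor
          · rintro ⟨hzy, (rfl | hz)⟩
            · exact Or.inl rfl
            · exact Or.inr ⟨hzy, hz⟩
          · rintro (rfl | ⟨hzy, hz⟩)
            · exact ⟨fun h => hx (h ▸ hy), Or.inl rfl⟩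
            · exact ⟨hzy, Or.inr hz⟩
        rw [X.down_loc_side hx hy hfc g]
      have hsum : X.dist (k+1) (insert x r) * f x *
            ((∑ y ∈ r, X.dist (k+1) (insert x r) * g x
              / (((k:ℝ)+1) * X.dist k ((insert x r).erase y))) / ((k:ℝ)+1))
          = (∑ y ∈ r, (X.dist (k+1) (insert x r))^2
              / (((k:ℝ)+1)^2 * X.dist k ((insert x r).erase y))) * f x * g x := by
        rw [Finset.sum_div, Finset.mul_sum, Finset.sum_mul, Finset.sum_mul]
        refine Finset.sum_congr rfl fun y hy => ?_
        have hyx : y ∈ insert x r := Finset.mem_insert_of_mem hy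
        have hface : (insert x r).erase y ∈ X.faces k := by
          have := X.subface hfc (Finset.erase_subset y (insert x r))
          rwa [Finset.card_erase_of_mem hyx, (X.mem_faces_iff.mp hfc).1,
            Nat.add_sub_cancel] at this
        have hdy : X.dist k ((insert x r).erase y) ≠ 0 := (X.dist_pos hface).ne'
        field_simp
      rw [hLG, add_div, mul_add, hsum]
    · rw [if_neg hc, if_neg hc, if_neg hc, zero_mul, zero_add]
  rw [Finset.sum_congr rfl main, Finset.sum_add_distrib, ← Finset.sum_mul,
    X.sum_loc_eval hr hkd1 f]
  congr 1
  field_simp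
  ring

lemma ip_loc_mplus {r : Finset V} (hr : r ∈ X.faces r.card) (hkd : r.card + 1 ≤ d)
    (f g : V → ℝ) :
    X.ip (r.card+1) (X.loc r f) (X.Mplus (r.card+1) (X.loc r g))
      = X.dist r.card r * X.linkEe r f g := by
  set k := r.card with hk
  have hkd2 : k + 2 ≤ d + 1 := by omega
  have hdr : 0 < X.dist k r := X.dist_pos hr
  have hc21 : (((k:ℝ)+2) * ((k:ℝ)+1)) ≠ 0 := by positivity
  rw [X.ip_loc r f]
  have main : ∀ x ∈ (Finset.univ : Finset V),
      (if x ∉ r ∧ insert x r ∈ X.faces (k+1)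
        then X.dist (k+1) (insert x r) * f x * X.Mplus (k+1) (X.loc r g) (insert x r) else 0)
      = ∑ s ∈ X.faces (k+2), (if x ∉ r ∧ insert x r ∈ X.faces (k+1) ∧ insert x r ⊆ s
          then X.dist (k+2) s * (f x * (∑ y ∈ (s.erase x) \ r, g y))
            / (((k:ℝ)+2) * ((k:ℝ)+1)) else 0) := by
    intro x _
    by_cases hc : x ∉ r ∧ insert x r ∈ X.faces (k+1)
    · rw [if_pos hc]
      obtain ⟨hx, hfc⟩ := hc
      have hdt : X.dist (k+1) (insert x r) ≠ 0 := (X.dist_pos hfc).ne'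
      rw [Mplus, Finset.sum_filter, Finset.mul_sum]
      refine Finset.sum_congr rfl fun s hs => ?_
      by_cases hts : insert x r ⊆ s
      · rw [if_pos hts, if_pos ⟨hx, hfc, hts⟩]
        have hxs : x ∈ s := hts (Finset.mem_insert_self x r)
        have hscard : s.card = k + 2 := (X.mem_faces_iff.mp hs).1
        have hinner : ∑ z ∈ insert x r, X.loc r g (s.erase z)
            = ∑ y ∈ (s.erase x) \ r, g y := by
          rw [Finset.sum_insert hx]
          have hz0 : ∀ z ∈ r, X.loc r g (s.erase z) = 0 := by
            intro z hz
            rw [loc, if_neg]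
            rintro ⟨-, hrsub⟩
            exact (Finset.notMem_erase z s) (hrsub hz)
          rw [Finset.sum_eq_zero hz0, add_zero, loc, if_pos]
          constructor
          · have hsub : s.erase x ⊆ s := Finset.erase_subset x s
            have h1 := X.subface hs hsub
            rw [Finset.card_erase_of_mem hxs, hscard] at h1
            have h2 : k + 2 - 1 = k + 1 := by omega
            rw [h2] at h1
            exact h1
          · intro z hz
            exact Finset.mem_erase.mpr ⟨fun h => hx (h ▸ hz), hts (Finset.mem_insert_of_mem hz)⟩
        rw [hinner]
        push_cast
        field_simp
        ring
      · rw [if_neg hts, if_neg (by tauto), mul_zero]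
    · rw [if_neg hc, eq_comm]
      refine Finset.sum_eq_zero fun s _ => ?_
      rw [if_neg (by tauto)]
  rw [Finset.sum_congr rfl main, Finset.sum_comm]
  have hD2 := X.distAbove_two hr hkd2
  have hD2pos : 0 < X.distAbove (k+2) r := by
    have hq : (0:ℝ) < ((k:ℝ)+2) * (((k:ℝ)+1) * X.dist k r) := by positivity
    linarith
  rw [linkEe, Finset.mul_sum, Finset.sum_filter]
  refine Finset.sum_congr rfl fun s hs => ?_
  have hscard : s.card = k + 2 := (X.mem_faces_iff.mp hs).1
  by_cases hrs : r ⊆ s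
  · rw [if_pos hrs]
    have conv : ∀ x ∈ (Finset.univ : Finset V),
        (if x ∉ r ∧ insert x r ∈ X.faces (k+1) ∧ insert x r ⊆ s
          then X.dist (k+2) s * (f x * (∑ y ∈ (s.erase x) \ r, g y))
            / (((k:ℝ)+2) * ((k:ℝ)+1)) else 0)
        = (if x ∈ s \ r
            then X.dist (k+2) s * (f x * (∑ y ∈ (s \ r).erase x, g y))
              / (((k:ℝ)+2) * ((k:ℝ)+1)) else 0) := by
      intro x _
      by_cases hxs : x ∈ s \ r
      · obtain ⟨hx1, hx2⟩ := Finset.mem_sdiff.mp hxs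
        have hsub : insert x r ⊆ s := Finset.insert_subset hx1 hrs
        have hface : insert x r ∈ X.faces (k+1) := by
          have := X.subface hs hsub
          rwa [Finset.card_insert_of_notMem hx2] at this
        rw [if_pos ⟨hx2, hface, hsub⟩, if_pos hxs, erase_sdiff_comm']
      · rw [if_neg hxs, if_neg]
        rintro ⟨hx2, -, hsub⟩
        exact hxs (Finset.mem_sdiff.mpr ⟨hsub (Finset.mem_insert_self x r), hx2⟩)
    rw [Finset.sum_congr rfl conv, Finset.sum_ite_mem, Finset.univ_inter]
    -- now pure algebra with sums over s \ r
    have hT : ∑ x ∈ s \ r, X.dist (k+2) s * (f x * (∑ y ∈ (s \ r).erase x, g y))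
          / (((k:ℝ)+2) * ((k:ℝ)+1))
        = X.dist (k+2) s * (∑ x ∈ s \ r, ∑ y ∈ (s \ r).erase x, f x * g y)
          / (((k:ℝ)+2) * ((k:ℝ)+1)) := by
      rw [Finset.mul_sum, Finset.sum_div]
      refine Finset.sum_congr rfl fun x _ => ?_
      rw [Finset.mul_sum]
    rw [hT]
    have scalar : ∀ (a T dr D2 c : ℝ), c ≠ 0 → D2 ≠ 0 → 2 * D2 = c * dr →
        a * T / c = dr * (a / D2 * (T / 2)) := by
      intro a T dr D2 c hc hD2ne h
      field_simp
      linear_combination a * T * h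
    exact scalar _ _ _ _ _ hc21 hD2pos.ne' (by linear_combination hD2)
  · rw [if_neg hrs, Finset.sum_eq_zero]
    intro x _
    rw [if_neg]
    rintro ⟨-, -, hsub⟩
    exact hrs ((Finset.subset_insert x r).trans hsub)

lemma distAbove_nonneg (m : ℕ) (r : Finset V) : 0 ≤ X.distAbove m r :=
  Finset.sum_nonneg fun s _ => X.dist_nonneg _ _

lemma linkEv_sq_nonneg (r : Finset V) (f : V → ℝ) :
    0 ≤ X.linkEv r (fun x => f x ^ 2) := by
  rw [linkEv]
  refine Finset.sum_nonneg fun s _ => ?_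
  exact mul_nonneg (div_nonneg (X.dist_nonneg _ _) (X.distAbove_nonneg _ _))
    (Finset.sum_nonneg fun x _ => sq_nonneg _)

lemma link_bound_aux {γ : ℝ} (hγ0 : 0 ≤ γ) (hX : X.IsHDX γ) {r : Finset V}
    (hr : r ∈ X.faces r.card) (hkd : r.card + 1 ≤ d) :
    X.LinkBound r (3 * ((r.card : ℝ) + 1) * γ) := by
  intro f g
  set k := r.card with hk
  have hkd1 : k + 1 ≤ d + 1 := le_trans hkd (Nat.le_succ d)
  have hdr : 0 < X.dist k r := X.dist_pos hr
  set c : ℝ := ((k:ℝ)+1) * X.dist k r with hc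
  have hc0 : 0 ≤ c := by positivity
  set Ef := X.linkEv r f with hEf
  set Eg := X.linkEv r g with hEg
  set Nf := X.linkEv r (fun x => f x ^ 2) with hNf
  set Ng := X.linkEv r (fun x => g x ^ 2) with hNg
  have hNf0 : 0 ≤ Nf := X.linkEv_sq_nonneg r f
  have hNg0 : 0 ≤ Ng := X.linkEv_sq_nonneg r g
  have hsq0 : 0 ≤ Real.sqrt Nf * Real.sqrt Ng :=
    mul_nonneg (Real.sqrt_nonneg _) (Real.sqrt_nonneg _)
  set B : V → ℝ := fun x => ∑ y ∈ r, (X.dist (k+1) (insert x r))^2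
      / (((k:ℝ)+1)^2 * X.dist k ((insert x r).erase y)) with hB
  set R : ℝ := ∑ x ∈ Finset.univ, (if x ∉ r ∧ insert x r ∈ X.faces (k+1)
      then B x * f x * g x else 0) with hR
  have hM := X.ip_loc_mplus hr hkd f g
  have hL := X.ip_loc_lower hr hkd f g
  have hFF := X.ip_loc_self hr hkd1 f
  have hGG := X.ip_loc_self hr hkd1 g
  have hXineq := hX k hkd (X.loc r g)
  set E1 : ℝ := X.ip (k+1) (X.loc r f)
      (fun t => X.Mplus (k+1) (X.loc r g) t - X.lower (k+1) (X.loc r g) t) with hE1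
  have hE1eq : E1 = X.dist k r * X.linkEe r f g - (X.dist k r * (Ef*Eg) + R) := by
    rw [hE1, X.ip_sub, hM, hL]
  have sqrt_prod : ∀ z : ℝ, 0 ≤ z →
      Real.sqrt (z * Nf) * Real.sqrt (z * Ng) = z * (Real.sqrt Nf * Real.sqrt Ng) := by
    intro z hz
    rw [Real.sqrt_mul hz, Real.sqrt_mul hz]
    have : Real.sqrt z * Real.sqrt Nf * (Real.sqrt z * Real.sqrt Ng)
        = (Real.sqrt z * Real.sqrt z) * (Real.sqrt Nf * Real.sqrt Ng) := by ring
    rw [this, Real.mul_self_sqrt hz]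
  have hE1bound : |E1| ≤ γ * c * (Real.sqrt Nf * Real.sqrt Ng) := by
    calc |E1| ≤ Real.sqrt (X.ip (k+1) (X.loc r f) (X.loc r f)) *
        Real.sqrt (X.ip (k+1)
          (fun t => X.Mplus (k+1) (X.loc r g) t - X.lower (k+1) (X.loc r g) t)
          (fun t => X.Mplus (k+1) (X.loc r g) t - X.lower (k+1) (X.loc r g) t)) := by
          rw [hE1]; exact X.ip_abs_le _ _ _
      _ ≤ Real.sqrt (c * Nf) * Real.sqrt (γ^2 * (c * Ng)) := by
          have e1 : X.ip (k+1) (X.loc r f) (X.loc r f) = c * Nf := by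
            rw [hFF]
          have e2 : X.ip (k+1)
              (fun t => X.Mplus (k+1) (X.loc r g) t - X.lower (k+1) (X.loc r g) t)
              (fun t => X.Mplus (k+1) (X.loc r g) t - X.lower (k+1) (X.loc r g) t)
              ≤ γ^2 * (c * Ng) := by
            refine hXineq.trans (le_of_eq ?_)
            rw [hGG]
          rw [e1]
          exact mul_le_mul_of_nonneg_left (Real.sqrt_le_sqrt e2) (Real.sqrt_nonneg _)
      _ = γ * c * (Real.sqrt Nf * Real.sqrt Ng) := by
          rw [Real.sqrt_mul (sq_nonneg γ), Real.sqrt_sq hγ0]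
          rw [show Real.sqrt (c*Nf) * (γ * Real.sqrt (c*Ng))
              = γ * (Real.sqrt (c*Nf) * Real.sqrt (c*Ng)) from by ring]
          rw [sqrt_prod c hc0]
          ring
  have hRbound : |R| ≤ γ * c * (Real.sqrt Nf * Real.sqrt Ng) := by
    have hRw : R = ∑ x ∈ Finset.univ,
        (if x ∉ r ∧ insert x r ∈ X.faces (k+1) then B x else 0) * f x * g x := by
      rw [hR]
      refine Finset.sum_congr rfl fun x _ => ?_
      by_cases hcx : x ∉ r ∧ insert x r ∈ X.faces (k+1)
      · rw [if_pos hcx, if_pos hcx]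
      · rw [if_neg hcx, if_neg hcx, zero_mul, zero_mul]
    have hw0 : ∀ x ∈ (Finset.univ : Finset V),
        0 ≤ (if x ∉ r ∧ insert x r ∈ X.faces (k+1) then B x else 0) := by
      intro x _
      by_cases hcx : x ∉ r ∧ insert x r ∈ X.faces (k+1)
      · rw [if_pos hcx, hB]
        refine Finset.sum_nonneg fun y _ => ?_
        refine div_nonneg (sq_nonneg _) (mul_nonneg (sq_nonneg _) (X.dist_nonneg _ _))
      · rw [if_neg hcx]
    have hCS := weighted_CS Finset.univ
      (fun x => if x ∉ r ∧ insert x r ∈ X.faces (k+1) then B x else 0) f g hw0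
    rw [← hRw] at hCS
    have hBle : ∀ x, x ∉ r ∧ insert x r ∈ X.faces (k+1) →
        B x ≤ γ * X.dist (k+1) (insert x r) := by
      intro x hcx
      have hclaim := X.claimA hγ0 hX hkd hcx.2
      refine le_trans ?_ hclaim
      refine Finset.sum_le_sum_of_subset_of_nonneg (Finset.subset_insert x r) ?_
      intro y _ _
      exact div_nonneg (sq_nonneg _) (mul_nonneg (sq_nonneg _) (X.dist_nonneg _ _))
    have hsum_le : ∀ φ : V → ℝ,
        ∑ x ∈ Finset.univ, (if x ∉ r ∧ insert x r ∈ X.faces (k+1) then B x else 0) * φ x * φ x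
          ≤ γ * (c * X.linkEv r (fun x => φ x ^ 2)) := by
      intro φ
      have step : ∀ x ∈ (Finset.univ : Finset V),
          (if x ∉ r ∧ insert x r ∈ X.faces (k+1) then B x else 0) * φ x * φ x
            ≤ γ * (if x ∉ r ∧ insert x r ∈ X.faces (k+1)
                then X.dist (k+1) (insert x r) * φ x ^ 2 else 0) := by
        intro x _
        by_cases hcx : x ∉ r ∧ insert x r ∈ X.faces (k+1)
        · rw [if_pos hcx, if_pos hcx]
          have h1 : B x * φ x * φ x = B x * φ x ^ 2 := by ring
          rw [h1]
          have h2 : γ * (X.dist (k+1) (insert x r) * φ x ^ 2)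
              = (γ * X.dist (k+1) (insert x r)) * φ x ^ 2 := by ring
          rw [h2]
          exact mul_le_mul_of_nonneg_right (hBle x hcx) (sq_nonneg _)
        · rw [if_neg hcx, if_neg hcx, zero_mul, zero_mul, mul_zero]
      refine (Finset.sum_le_sum step).trans (le_of_eq ?_)
      rw [← Finset.mul_sum, X.sum_loc_eval hr hkd1 (fun x => φ x ^ 2)]
    have h1 : Real.sqrt (∑ x ∈ Finset.univ,
        (if x ∉ r ∧ insert x r ∈ X.faces (k+1) then B x else 0) * f x * f x)
        ≤ Real.sqrt (γ * c * Nf) := by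
      refine Real.sqrt_le_sqrt ?_
      refine (hsum_le f).trans (le_of_eq ?_)
      rw [hNf]; ring
    have h2 : Real.sqrt (∑ x ∈ Finset.univ,
        (if x ∉ r ∧ insert x r ∈ X.faces (k+1) then B x else 0) * g x * g x)
        ≤ Real.sqrt (γ * c * Ng) := by
      refine Real.sqrt_le_sqrt ?_
      refine (hsum_le g).trans (le_of_eq ?_)
      rw [hNg]; ring
    refine hCS.trans ?_
    have h3 : Real.sqrt (γ * c * Nf) * Real.sqrt (γ * c * Ng)
        = γ * c * (Real.sqrt Nf * Real.sqrt Ng) := sqrt_prod (γ * c) (mul_nonneg hγ0 hc0)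
    calc _ ≤ Real.sqrt (γ * c * Nf) * Real.sqrt (γ * c * Ng) :=
          mul_le_mul h1 h2 (Real.sqrt_nonneg _) (Real.sqrt_nonneg _)
      _ = γ * c * (Real.sqrt Nf * Real.sqrt Ng) := h3
  -- combine
  have hkey : X.dist k r * (X.linkEe r f g - Ef * Eg) = E1 + R := by
    rw [hE1eq]; ring
  have habs : X.dist k r * |X.linkEe r f g - Ef * Eg| ≤
      X.dist k r * (2 * γ * ((k:ℝ)+1) * (Real.sqrt Nf * Real.sqrt Ng)) := by
    have h4 : |X.dist k r * (X.linkEe r f g - Ef * Eg)| ≤ |E1| + |R| := by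
      rw [hkey]; exact abs_add_le E1 R
    rw [abs_mul, abs_of_pos hdr] at h4
    refine h4.trans ?_
    have : γ * c * (Real.sqrt Nf * Real.sqrt Ng) + γ * c * (Real.sqrt Nf * Real.sqrt Ng)
        = X.dist k r * (2 * γ * ((k:ℝ)+1) * (Real.sqrt Nf * Real.sqrt Ng)) := by
      rw [hc]; ring
    linarith [hE1bound, hRbound]
  have hfinal : |X.linkEe r f g - Ef * Eg|
      ≤ 2 * γ * ((k:ℝ)+1) * (Real.sqrt Nf * Real.sqrt Ng) :=
    le_of_mul_le_mul_left habs hdr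
  refine hfinal.trans ?_
  have hpos : 0 ≤ ((k:ℝ)+1) * γ * (Real.sqrt Nf * Real.sqrt Ng) :=
    mul_nonneg (mul_nonneg (by positivity) hγ0) hsq0
  have e3 : 3 * ((k:ℝ)+1) * γ * Real.sqrt Nf * Real.sqrt Ng
      = 2 * γ * ((k:ℝ)+1) * (Real.sqrt Nf * Real.sqrt Ng)
        + ((k:ℝ)+1) * γ * (Real.sqrt Nf * Real.sqrt Ng) := by ring
  rw [e3]
  linarith

end WSC

/-- If `X` is a `γ`-HDX (`0 ≤ γ < 1`), then `X` is a
`3dγ`-two-sided link expander: `λ(A_r) ≤ 3(i+1)γ` for every `r ∈ X(i-1)` with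
`i ≤ d-1`. -/
theorem hdx_is_link_expander {V : Type} [DecidableEq V] [Fintype V] {d : ℕ}
    (X : WSC V d) (γ : ℝ) (hγ0 : 0 ≤ γ) (hγ1 : γ < 1) (hX : X.IsHDX γ) :
    (∀ i, i + 1 ≤ d → ∀ r ∈ X.faces i, X.LinkBound r (3 * ((i : ℝ) + 1) * γ)) ∧
    X.TwoSidedLinkExpander (3 * (d : ℝ) * γ) := by
  constructor
  · intro i hi r hr
    have hcard : r.card = i := (X.mem_faces_iff.mp hr).1
    have hr' : r ∈ X.faces r.card := by rw [hcard]; exact hr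
    have hkd : r.card + 1 ≤ d := by rw [hcard]; exact hi
    have h := X.link_bound_aux hγ0 hX hr' hkd
    rwa [hcard] at h
  · intro r hrall hcard2
    have hr' : r ∈ X.faces r.card := by
      obtain ⟨-, hex⟩ := Finset.mem_filter.mp hrall
      exact X.mem_faces_iff.mpr ⟨rfl, hex⟩
    have hkd : r.card + 1 ≤ d := by omega
    have hLB := X.link_bound_aux hγ0 hX hr' hkd
    intro f g
    refine (hLB f g).trans ?_
    have h1 : ((r.card:ℝ)+1) ≤ (d:ℝ) := by exact_mod_cast hkd
    have h2 : 3 * ((r.card:ℝ)+1) * γ ≤ 3 * (d:ℝ) * γ := by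
      nlinarith [mul_nonneg (sub_nonneg.mpr h1) hγ0]
    exact mul_le_mul_of_nonneg_right
      (mul_le_mul_of_nonneg_right h2 (Real.sqrt_nonneg _)) (Real.sqrt_nonneg _)
end
end

section
/- Let X be a proper k-dimensional simplicial complex (k ≥ 2) whose 1-skeleton is connected, and let f : X(k) → {0,1} be a Boolean function of degree 1. Then there exists an independent set I of the 1-skeleton of X such that either f(s) = 1 iff s ∩ I ≠ ∅, or f(s) = 1 iff s ∩ I = ∅. -/
open Finset

noncomputable section

/-- The 1-skeleton of the complex, as a simple graph on the vertex type. -/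
def WSC.skeleton {V : Type} [DecidableEq V] [Fintype V] {k : ℕ}
    (X : WSC V k) : SimpleGraph V where
  Adj u v := u ≠ v ∧ ({u, v} : Finset V) ∈ X.faces 2
  symm := ⟨by
    intro u v h
    exact ⟨h.1.symm, by rw [Finset.pair_comm]; exact h.2⟩⟩
  loopless := ⟨fun u h => h.1 rfl⟩

section DegreeOneAux

variable {V : Type} [DecidableEq V] [Fintype V] {k : ℕ}

lemma WSC.mem_faces_iff_s11 (X : WSC V k) {j : ℕ} {t : Finset V} :
    t ∈ X.faces j ↔ t.card = j ∧ ∃ s ∈ X.top, t ⊆ s := by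
  simp [WSC.faces]

lemma WSC.subset_face_mem (X : WSC V k) {s t : Finset V} {j : ℕ}
    (hs : s ∈ X.top) (hts : t ⊆ s) (hc : t.card = j) : t ∈ X.faces j :=
  X.mem_faces_iff_s11.2 ⟨hc, s, hs, hts⟩

lemma WSC.erase_mem_faces (X : WSC V k) {j : ℕ} {t : Finset V} (ht : t ∈ X.faces (j+1))
    {x : V} (hx : x ∈ t) : t.erase x ∈ X.faces j := by
  obtain ⟨hc, s, hs, hts⟩ := X.mem_faces_iff_s11.1 ht
  exact X.subset_face_mem hs ((Finset.erase_subset x t).trans hts)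
    (by rw [Finset.card_erase_of_mem hx, hc]; omega)

lemma WSC.mem_top_of_faces (X : WSC V k) {t : Finset V} (ht : t ∈ X.faces (k+1)) :
    t ∈ X.top := by
  obtain ⟨hc, s, hs, hts⟩ := X.mem_faces_iff_s11.1 ht
  have hps := X.pure s hs
  have : t = s := Finset.eq_of_subset_of_card_le hts (by omega)
  rwa [this]

lemma sum_erase_linear (t : Finset V) (d : V → ℝ) :
    ∑ x ∈ t, (∑ v ∈ t.erase x, d v) = ((t.card : ℝ) - 1) * ∑ v ∈ t, d v := by
  have h : ∀ x ∈ t, (∑ v ∈ t.erase x, d v) = (∑ v ∈ t, d v) - d x := fun x hx =>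
    Finset.sum_erase_eq_sub hx
  rw [Finset.sum_congr rfl h, Finset.sum_sub_distrib, Finset.sum_const, nsmul_eq_mul]
  ring

lemma sum_erase_quad (t : Finset V) (c : V → ℝ) :
    ∑ x ∈ t, ((∑ v ∈ t.erase x, c v)^2 - ∑ v ∈ t.erase x, (c v)^2)
      = ((t.card : ℝ) - 2) * ((∑ v ∈ t, c v)^2 - ∑ v ∈ t, (c v)^2) := by
  have h : ∀ x ∈ t, ((∑ v ∈ t.erase x, c v)^2 - ∑ v ∈ t.erase x, (c v)^2)
      = ((∑ v ∈ t, c v)^2 - ∑ v ∈ t, (c v)^2) - 2*(∑ v ∈ t, c v)*(c x) + 2*(c x)^2 := by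
    intro x hx
    rw [Finset.sum_erase_eq_sub hx, Finset.sum_erase_eq_sub hx]
    ring
  rw [Finset.sum_congr rfl h]
  simp only [Finset.sum_add_distrib, Finset.sum_sub_distrib, Finset.sum_const, nsmul_eq_mul,
    ← Finset.mul_sum]
  ring

end DegreeOneAux

section DegreeOneAux2

variable {V : Type} [DecidableEq V] [Fintype V] {k : ℕ}

lemma star_lemma (X : WSC V k) (hk : 2 ≤ k) (hX : X.Proper) (c : V → ℝ)
    (hb : ∀ s ∈ X.faces (k+1), (∑ v ∈ s, c v)^2 - (∑ v ∈ s, c v) = 0) :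
    ∀ e ∈ X.faces 2,
      ((∑ v ∈ e, c v)^2 - ∑ v ∈ e, (c v)^2)
        + (1/(k:ℝ)) * (∑ v ∈ e, ((c v)^2 - c v)) = 0 := by
  have hk0 : (k:ℝ) ≠ 0 := by
    have : (0:ℝ) < k := by exact_mod_cast Nat.lt_of_lt_of_le (by norm_num) hk
    linarith
  set G : ℕ → Finset V → ℝ := fun j t =>
    ((∑ v ∈ t, c v)^2 - ∑ v ∈ t, (c v)^2)
      + (((j:ℝ) - 1)/(k:ℝ)) * (∑ v ∈ t, ((c v)^2 - c v)) with hG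
  have base : ∀ t ∈ X.faces (k+1), G (k+1) t = 0 := by
    intro t ht
    have h1 : (((k+1:ℕ):ℝ) - 1)/(k:ℝ) = 1 := by
      push_cast; field_simp; ring
    simp only [hG, h1, one_mul]
    have h2 := hb t ht
    rw [Finset.sum_sub_distrib]
    linarith
  have step : ∀ j, 2 ≤ j → j ≤ k → (∀ t ∈ X.faces (j+1), G (j+1) t = 0) →
      ∀ t ∈ X.faces j, G j t = 0 := by
    intro j h2 hjk hup t ht
    have key := hX j hjk (fun t => if t ∈ X.faces j then G j t else 0)
      (fun t ht' => if_neg ht') ?_ t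
    · rw [if_pos ht] at key; exact key
    · intro s hs
      have hcard : s.card = j + 1 := (X.mem_faces_iff_s11.1 hs).1
      have hnum : ∑ x ∈ s, (if s.erase x ∈ X.faces j then G j (s.erase x) else 0)
          = ((j:ℝ) - 1) * G (j+1) s := by
        have hcong : ∀ x ∈ s,
            (if s.erase x ∈ X.faces j then G j (s.erase x) else 0) = G j (s.erase x) :=
          fun x hx => if_pos (X.erase_mem_faces hs hx)
        rw [Finset.sum_congr rfl hcong]
        simp only [hG]
        rw [Finset.sum_add_distrib, sum_erase_quad, ← Finset.mul_sum, sum_erase_linear, hcard]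
        push_cast
        ring
      simp only [WSC.up]
      rw [hnum, hup s hs, mul_zero, zero_div]
  have chain : ∀ i j, 2 ≤ j → j + i = k → ∀ t ∈ X.faces j, G j t = 0 := by
    intro i
    induction i with
    | zero =>
      intro j h2 hj
      have : j = k := by omega
      subst this
      exact step j h2 le_rfl base
    | succ i ih =>
      intro j h2 hj
      exact step j h2 (by omega) (ih (j+1) (by omega) (by omega))
  intro e he
  have h := chain (k-2) 2 le_rfl (by omega) e he
  simp only [hG] at h
  linear_combination h

end DegreeOneAux2

section DegreeOneAlg

/-- edge relation -/
def Rrel (K a b : ℝ) : Prop := 2*K*a*b + (a^2 - a) + (b^2 - b) = 0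

lemma Rrel.symm' {K a b : ℝ} (h : Rrel K a b) : Rrel K b a := by
  unfold Rrel at *; linarith

lemma quad01 {x : ℝ} (h : x^2 - x = 0) : x = 0 ∨ x = 1 := by
  have : x * (x - 1) = 0 := by linear_combination h
  rcases mul_eq_zero.1 this with h0 | h1
  · exact Or.inl h0
  · exact Or.inr (by linarith)

lemma Rzero {K x : ℝ} (h : Rrel K x 0) : x = 0 ∨ x = 1 := by
  unfold Rrel at h
  exact quad01 (by linarith)

lemma Rself {K x : ℝ} (hK : 2 ≤ K) (h : Rrel K x x) : x = 0 ∨ x = 1/(K+1) := by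
  unfold Rrel at h
  have hK1 : K + 1 ≠ 0 := by linarith
  have : x * ((K+1)*x - 1) = 0 := by linear_combination h/2
  rcases mul_eq_zero.1 this with h0 | h1
  · exact Or.inl h0
  · right
    field_simp
    linarith

lemma Rt {K x : ℝ} (hK : 2 ≤ K) (h : Rrel K x (1/(K+1))) :
    x = 1/(K+1) ∨ x = 1/(K+1) - 1 := by
  unfold Rrel at h
  have hK1 : K + 1 ≠ 0 := by linarith
  have ht : (K+1) * (1/(K+1)) = 1 := by field_simp
  have : (x - 1/(K+1)) * (x - 1/(K+1) + 1) = 0 := by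
    linear_combination h - 2*x*ht
  rcases mul_eq_zero.1 this with h0 | h1
  · exact Or.inl (by linarith)
  · exact Or.inr (by linarith)

lemma Rdistinct {K a b g : ℝ} (h1 : Rrel K a g) (h2 : Rrel K b g) (hab : a ≠ b) :
    2*K*g + a + b - 1 = 0 := by
  unfold Rrel at h1 h2
  have : (a - b) * (2*K*g + a + b - 1) = 0 := by linear_combination h1 - h2
  rcases mul_eq_zero.1 this with h0 | h1'
  · exact absurd (by linarith : a = b) hab
  · exact h1'

lemma triangle_class {K a b g : ℝ} (hK : 2 ≤ K)
    (hab : Rrel K a b) (hag : Rrel K a g) (hbg : Rrel K b g) :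
    ((a = 0 ∨ a = 1) ∧ (b = 0 ∨ b = 1) ∧ (g = 0 ∨ g = 1)) ∨
    ((a = 1/(K+1) ∨ a = 1/(K+1) - 1) ∧ (b = 1/(K+1) ∨ b = 1/(K+1) - 1) ∧
      (g = 1/(K+1) ∨ g = 1/(K+1) - 1)) := by
  by_cases heab : a = b
  · subst heab
    rcases Rself hK hab with h0 | ht
    · subst h0
      exact Or.inl ⟨Or.inl rfl, Or.inl rfl, quad01 (by unfold Rrel at hag; linarith)⟩
    · subst ht
      exact Or.inr ⟨Or.inl rfl, Or.inl rfl, Rt hK hag.symm'⟩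
  · by_cases hebg : b = g
    · subst hebg
      rcases Rself hK hbg with h0 | ht
      · subst h0
        exact Or.inl ⟨Rzero hab, Or.inl rfl, Or.inl rfl⟩
      · subst ht
        exact Or.inr ⟨Rt hK hab, Or.inl rfl, Or.inl rfl⟩
    · by_cases heag : a = g
      · subst heag
        rcases Rself hK hag with h0 | ht
        · subst h0
          exact Or.inl ⟨Or.inl rfl, Rzero hab.symm', Or.inl rfl⟩
        · subst ht
          exact Or.inr ⟨Or.inl rfl, Rt hK hab.symm', Or.inl rfl⟩
      · exfalso
        have e1 := Rdistinct hag hbg heab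
        have e2 := Rdistinct hab.symm' hag.symm' hebg
        have : (2*K - 1) * (g - a) = 0 := by linear_combination e1 - e2
        rcases mul_eq_zero.1 this with h0 | h1
        · linarith
        · exact heag (by linarith)

lemma Rone_one {K : ℝ} (hK : 2 ≤ K) : ¬ Rrel K 1 1 := by
  unfold Rrel; intro h; nlinarith

lemma Rtm_tm {K : ℝ} (hK : 2 ≤ K) : ¬ Rrel K (1/(K+1) - 1) (1/(K+1) - 1) := by
  unfold Rrel
  intro h
  have hK1 : K + 1 ≠ 0 := by linarith
  have ht : (K+1) * (1/(K+1)) = 1 := by field_simp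
  nlinarith [h, ht]

lemma t0_pos {K : ℝ} (hK : 2 ≤ K) : 0 < 1/(K+1) := by positivity

lemma t0_lt_one {K : ℝ} (hK : 2 ≤ K) : 1/(K+1) < 1 := by
  rw [div_lt_one (by linarith)]; linarith

end DegreeOneAlg

section DegreeOneTri

variable {V : Type} [DecidableEq V] [Fintype V] {k : ℕ}

lemma WSC.pair_face (X : WSC V k) {s : Finset V} (hs : s ∈ X.top) {a b : V}
    (ha : a ∈ s) (hb : b ∈ s) (hne : a ≠ b) : ({a,b} : Finset V) ∈ X.faces 2 :=
  X.subset_face_mem hs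
    (Finset.insert_subset ha (Finset.singleton_subset_iff.2 hb)) (Finset.card_pair hne)

lemma exists_tri_vertex (X : WSC V k) (hk : 2 ≤ k) {v : V}
    (hv : ({v} : Finset V) ∈ X.faces 1) :
    ∃ u w : V, v ≠ u ∧ v ≠ w ∧ u ≠ w ∧
      ({v,u} : Finset V) ∈ X.faces 2 ∧ ({v,w} : Finset V) ∈ X.faces 2 ∧
      ({u,w} : Finset V) ∈ X.faces 2 := by
  obtain ⟨_, s, hs, hsub⟩ := X.mem_faces_iff_s11.1 hv
  have hvs : v ∈ s := hsub (Finset.mem_singleton_self v)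
  have hcs := X.pure s hs
  have h1 : (s.erase v).Nonempty := by
    rw [← Finset.card_pos, Finset.card_erase_of_mem hvs]; omega
  obtain ⟨u, hu⟩ := h1
  have h2 : ((s.erase v).erase u).Nonempty := by
    rw [← Finset.card_pos, Finset.card_erase_of_mem hu, Finset.card_erase_of_mem hvs]; omega
  obtain ⟨w, hw⟩ := h2
  obtain ⟨hwu, hw'⟩ := Finset.mem_erase.1 hw
  obtain ⟨hwv, hws⟩ := Finset.mem_erase.1 hw'
  obtain ⟨huv, hus⟩ := Finset.mem_erase.1 hu
  exact ⟨u, w, Ne.symm huv, Ne.symm hwv, Ne.symm hwu,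
    X.pair_face hs hvs hus (Ne.symm huv), X.pair_face hs hvs hws (Ne.symm hwv),
    X.pair_face hs hus hws (Ne.symm hwu)⟩

lemma exists_tri_edge (X : WSC V k) (hk : 2 ≤ k) {u v : V} (hne : u ≠ v)
    (he : ({u,v} : Finset V) ∈ X.faces 2) :
    ∃ w, u ≠ w ∧ v ≠ w ∧ ({u,w} : Finset V) ∈ X.faces 2 ∧
      ({v,w} : Finset V) ∈ X.faces 2 := by
  obtain ⟨_, s, hs, hsub⟩ := X.mem_faces_iff_s11.1 he
  have hus : u ∈ s := hsub (by simp)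
  have hvs : v ∈ s := hsub (by simp)
  have hcs := X.pure s hs
  have h1 : ((s.erase u).erase v).Nonempty := by
    rw [← Finset.card_pos, Finset.card_erase_of_mem
      (Finset.mem_erase.2 ⟨Ne.symm hne, hvs⟩), Finset.card_erase_of_mem hus]
    omega
  obtain ⟨w, hw⟩ := h1
  obtain ⟨hwv, hw'⟩ := Finset.mem_erase.1 hw
  obtain ⟨hwu, hws⟩ := Finset.mem_erase.1 hw'
  exact ⟨w, Ne.symm hwu, Ne.symm hwv, X.pair_face hs hus hws (Ne.symm hwu),
    X.pair_face hs hvs hws (Ne.symm hwv)⟩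

lemma walk_prop {V : Type} {G : SimpleGraph V} (Q : V → Prop)
    (hedge : ∀ a b, G.Adj a b → Q a → Q b) {x y : V} (p : G.Walk x y) (hx : Q x) : Q y := by
  induction p with
  | nil => exact hx
  | cons h p ih => exact ih (hedge _ _ h hx)

end DegreeOneTri

/-- (Degree one theorem.)  Let `X` be a proper `k`-dimensional
complex (`k ≥ 2`) with a connected 1-skeleton.  Every Boolean degree-1 function
`f` on `X(k)` is the indicator of intersecting, or of not intersecting, an
independent set of the 1-skeleton. -/
theorem degree_one_boolean {V : Type} [DecidableEq V] [Fintype V] {k : ℕ}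
    (X : WSC V k) (hk : 2 ≤ k) (hX : X.Proper)
    (hconn : ∀ u v : V, ({u} : Finset V) ∈ X.faces 1 → ({v} : Finset V) ∈ X.faces 1 →
      X.skeleton.Reachable u v)
    (f : Finset V → ℝ) (c : V → ℝ)
    (hdeg : ∀ s ∈ X.faces (k + 1), f s = ∑ v ∈ s, c v)
    (hbool : ∀ s ∈ X.faces (k + 1), f s = 0 ∨ f s = 1) :
    ∃ I : Finset V,
      (∀ v ∈ I, ({v} : Finset V) ∈ X.faces 1) ∧
      (∀ u ∈ I, ∀ v ∈ I, ({u, v} : Finset V) ∉ X.faces 2) ∧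
      ((∀ s ∈ X.faces (k + 1), (f s = 1 ↔ (s ∩ I).Nonempty)) ∨
       (∀ s ∈ X.faces (k + 1), (f s = 1 ↔ s ∩ I = ∅))) := by
  classical
  have hK : (2:ℝ) ≤ (k:ℝ) := by exact_mod_cast hk
  have hK1 : (k:ℝ) + 1 ≠ 0 := by linarith
  have hk0 : (k:ℝ) ≠ 0 := by linarith
  have hb : ∀ s ∈ X.faces (k+1), (∑ v ∈ s, c v)^2 - (∑ v ∈ s, c v) = 0 := by
    intro s hs
    rcases hbool s hs with h | h <;> rw [hdeg s hs] at h <;> rw [h] <;> norm_num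
  have star := star_lemma X hk hX c hb
  have hR : ∀ u v : V, u ≠ v → ({u,v} : Finset V) ∈ X.faces 2 →
      Rrel (k:ℝ) (c u) (c v) := by
    intro u v huv he
    have h := star _ he
    rw [Finset.sum_pair huv, Finset.sum_pair huv, Finset.sum_pair huv] at h
    have hinv : (k:ℝ) * (1/(k:ℝ)) = 1 := by field_simp
    unfold Rrel
    linear_combination (k:ℝ) * h - (((c u)^2 - c u) + ((c v)^2 - c v)) * hinv
  have hsingle : ∀ s ∈ X.faces (k+1), ∀ v ∈ s, ({v} : Finset V) ∈ X.faces 1 := by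
    intro s hs v hv
    obtain ⟨_, s', hs', hsub⟩ := X.mem_faces_iff_s11.1 hs
    exact X.subset_face_mem hs' (Finset.singleton_subset_iff.2 (hsub hv))
      (Finset.card_singleton v)
  have hclass : ∀ v, ({v} : Finset V) ∈ X.faces 1 →
      (c v = 0 ∨ c v = 1) ∨ (c v = 1/((k:ℝ)+1) ∨ c v = 1/((k:ℝ)+1) - 1) := by
    intro v hv
    obtain ⟨u, w, hvu, hvw, huw, e1, e2, e3⟩ := exists_tri_vertex X hk hv
    rcases triangle_class hK (hR v u hvu e1) (hR v w hvw e2) (hR u w huw e3) with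
      ⟨h, _, _⟩ | ⟨h, _, _⟩
    · exact Or.inl h
    · exact Or.inr h
  have hprop : ∀ a b, X.skeleton.Adj a b →
      (c a = 1/((k:ℝ)+1) ∨ c a = 1/((k:ℝ)+1) - 1) →
      (c b = 1/((k:ℝ)+1) ∨ c b = 1/((k:ℝ)+1) - 1) := by
    intro a b hadj hca
    obtain ⟨hne, he⟩ := hadj
    obtain ⟨w, haw, hbw, e1, e2⟩ := exists_tri_edge X hk hne he
    rcases triangle_class hK (hR a b hne he) (hR a w haw e1) (hR b w hbw e2) with
      ⟨ha, hb', _⟩ | ⟨_, hb', _⟩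
    · exfalso
      have h0 := t0_pos hK
      have h1 := t0_lt_one hK
      rcases hca with h | h <;> rcases ha with h' | h' <;> rw [h'] at h <;> linarith
    · exact hb'
  have pair_ne : ∀ u v : V, ({u,v} : Finset V) ∈ X.faces 2 → u ≠ v := by
    intro u v he heq
    subst heq
    have := (X.mem_faces_iff_s11.1 he).1
    simp at this
  by_cases hA : ∀ v : V, ({v} : Finset V) ∈ X.faces 1 → (c v = 0 ∨ c v = 1)
  · set I := Finset.univ.filter
      (fun v => ({v} : Finset V) ∈ X.faces 1 ∧ c v = 1) with hI
    refine ⟨I, ?_, ?_, Or.inl ?_⟩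
    · intro v hv; exact (Finset.mem_filter.1 hv).2.1
    · intro u hu v hv he
      have hcu := (Finset.mem_filter.1 hu).2.2
      have hcv := (Finset.mem_filter.1 hv).2.2
      exact Rone_one hK (by have := hR u v (pair_ne u v he) he; rwa [hcu, hcv] at this)
    · intro s hs
      have hsum : f s = ((s ∩ I).card : ℝ) := by
        rw [hdeg s hs]
        have hc : ∀ v ∈ s, c v = if v ∈ I then (1:ℝ) else 0 := by
          intro v hv
          by_cases hvI : v ∈ I
          · rw [if_pos hvI]; exact (Finset.mem_filter.1 hvI).2.2
          · rw [if_neg hvI]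
            rcases hA v (hsingle s hs v hv) with h0 | h1
            · exact h0
            · exact absurd (Finset.mem_filter.2
                ⟨Finset.mem_univ v, hsingle s hs v hv, h1⟩) hvI
        rw [Finset.sum_congr rfl hc, Finset.sum_ite_mem, Finset.sum_const,
          nsmul_eq_mul, mul_one]
      constructor
      · intro h1
        rw [h1] at hsum
        have hcard : (s ∩ I).card = 1 := by exact_mod_cast hsum.symm
        exact Finset.card_pos.1 (by omega)
      · intro hne
        rcases hbool s hs with h0 | h1
        · exfalso
          rw [h0] at hsum
          have hcard : (s ∩ I).card = 0 := by exact_mod_cast hsum.symm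
          exact absurd (Finset.card_eq_zero.1 hcard) (Finset.nonempty_iff_ne_empty.1 hne)
        · exact h1
  · push_neg at hA
    obtain ⟨v₀, hv₀, hcv₀⟩ := hA
    have hv₀B : c v₀ = 1/((k:ℝ)+1) ∨ c v₀ = 1/((k:ℝ)+1) - 1 := by
      rcases hclass v₀ hv₀ with h | h
      · exact absurd h (by tauto)
      · exact h
    have hB : ∀ v, ({v} : Finset V) ∈ X.faces 1 →
        (c v = 1/((k:ℝ)+1) ∨ c v = 1/((k:ℝ)+1) - 1) := by
      intro v hv
      obtain ⟨p⟩ := hconn v₀ v hv₀ hv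
      exact walk_prop _ hprop p hv₀B
    set I := Finset.univ.filter
      (fun v => ({v} : Finset V) ∈ X.faces 1 ∧ c v = 1/((k:ℝ)+1) - 1) with hI
    refine ⟨I, ?_, ?_, Or.inr ?_⟩
    · intro v hv; exact (Finset.mem_filter.1 hv).2.1
    · intro u hu v hv he
      have hcu := (Finset.mem_filter.1 hu).2.2
      have hcv := (Finset.mem_filter.1 hv).2.2
      exact Rtm_tm hK (by have := hR u v (pair_ne u v he) he; rwa [hcu, hcv] at this)
    · intro s hs
      have hsum : f s = 1 - ((s ∩ I).card : ℝ) := by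
        rw [hdeg s hs]
        have hc : ∀ v ∈ s, c v = 1/((k:ℝ)+1) - (if v ∈ I then (1:ℝ) else 0) := by
          intro v hv
          by_cases hvI : v ∈ I
          · rw [if_pos hvI]
            have := (Finset.mem_filter.1 hvI).2.2
            linarith
          · rw [if_neg hvI, sub_zero]
            rcases hB v (hsingle s hs v hv) with h | h
            · exact h
            · exact absurd (Finset.mem_filter.2
                ⟨Finset.mem_univ v, hsingle s hs v hv, h⟩) hvI
        rw [Finset.sum_congr rfl hc, Finset.sum_sub_distrib, Finset.sum_ite_mem,
          Finset.sum_const, Finset.sum_const, nsmul_eq_mul, nsmul_eq_mul, mul_one]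
        have hcs : s.card = k+1 := (X.mem_faces_iff_s11.1 hs).1
        rw [hcs]
        have hone : ((k:ℝ)+1) * (1/((k:ℝ)+1)) = 1 := by field_simp
        push_cast
        linarith
      constructor
      · intro h1
        rw [h1] at hsum
        have hc0 : ((s ∩ I).card : ℝ) = 0 := by linarith
        have hcard : (s ∩ I).card = 0 := by exact_mod_cast hc0
        exact Finset.card_eq_zero.1 hcard
      · intro hempty
        rw [hempty] at hsum
        simpa using hsum
end
end

section
/- Suppose c_u, c_v, c_w ∈ ℝ satisfy the three equations 2k·c_a·c_b = c_a(1−c_a) + c_b(1−c_b) for each pair {a,b} ⊂ {u,v,w} (k ≥ 2). Then either two of them equal 0 and the third is in {0,1}, or two of them equal 1/(k+1) and the third is in {1/(k+1), 1/(k+1) − 1}. -/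
private lemma quad_aux (K c : ℝ) (hK : 0 < K)
    (h : 2 * K * c * c = c * (1 - c) + c * (1 - c)) :
    c = 0 ∨ c = 1 / (K + 1) := by
  have hne : K + 1 > 0 := by linarith
  have h0 : 2 * c * ((K + 1) * c - 1) = 0 := by linear_combination h
  rcases mul_eq_zero.mp h0 with h' | h'
  · left; linarith
  · right; field_simp; linarith

/-- Suppose `c_u, c_v, c_w ∈ ℝ` satisfy the three equations
`2k c_a c_b = c_a(1-c_a) + c_b(1-c_b)` for each pair `{a,b} ⊆ {u,v,w}`
(`k ≥ 2`).  Then either two of them equal `0` and the third is in `{0,1}`, or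
two of them equal `1/(k+1)` and the third is in `{1/(k+1), 1/(k+1) - 1}`. -/
theorem triangle_coefficient_classification (k : ℕ) (hk : 2 ≤ k)
    (cu cv cw : ℝ)
    (h1 : 2 * (k : ℝ) * cu * cv = cu * (1 - cu) + cv * (1 - cv))
    (h2 : 2 * (k : ℝ) * cu * cw = cu * (1 - cu) + cw * (1 - cw))
    (h3 : 2 * (k : ℝ) * cv * cw = cv * (1 - cv) + cw * (1 - cw)) :
    (cu = 0 ∧ cv = 0 ∧ (cw = 0 ∨ cw = 1)) ∨
    (cu = 0 ∧ cw = 0 ∧ (cv = 0 ∨ cv = 1)) ∨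
    (cv = 0 ∧ cw = 0 ∧ (cu = 0 ∨ cu = 1)) ∨
    (cu = 1 / ((k : ℝ) + 1) ∧ cv = 1 / ((k : ℝ) + 1) ∧
      (cw = 1 / ((k : ℝ) + 1) ∨ cw = 1 / ((k : ℝ) + 1) - 1)) ∨
    (cu = 1 / ((k : ℝ) + 1) ∧ cw = 1 / ((k : ℝ) + 1) ∧
      (cv = 1 / ((k : ℝ) + 1) ∨ cv = 1 / ((k : ℝ) + 1) - 1)) ∨
    (cv = 1 / ((k : ℝ) + 1) ∧ cw = 1 / ((k : ℝ) + 1) ∧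
      (cu = 1 / ((k : ℝ) + 1) ∨ cu = 1 / ((k : ℝ) + 1) - 1)) := by
  set K : ℝ := (k : ℝ) with hKdef
  have hK : (2 : ℝ) ≤ K := by rw [hKdef]; exact_mod_cast hk
  have hKpos : 0 < K := by linarith
  have hne : K + 1 > 0 := by linarith
  -- factorizations from differences of equations
  have fA : (cv - cw) * (2 * K * cu - 1 + cv + cw) = 0 := by linear_combination h1 - h2
  have fB : (cu - cw) * (2 * K * cv - 1 + cu + cw) = 0 := by linear_combination h1 - h3
  have fC : (cu - cv) * (2 * K * cw - 1 + cu + cv) = 0 := by linear_combination h2 - h3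
  -- helper for the "all equal" case
  have allEq : cu = cv → cv = cw → ((cu = 0 ∧ cv = 0 ∧ (cw = 0 ∨ cw = 1)) ∨
    (cu = 0 ∧ cw = 0 ∧ (cv = 0 ∨ cv = 1)) ∨
    (cv = 0 ∧ cw = 0 ∧ (cu = 0 ∨ cu = 1)) ∨
    (cu = 1 / (K + 1) ∧ cv = 1 / (K + 1) ∧
      (cw = 1 / (K + 1) ∨ cw = 1 / (K + 1) - 1)) ∨
    (cu = 1 / (K + 1) ∧ cw = 1 / (K + 1) ∧
      (cv = 1 / (K + 1) ∨ cv = 1 / (K + 1) - 1)) ∨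
    (cv = 1 / (K + 1) ∧ cw = 1 / (K + 1) ∧
      (cu = 1 / (K + 1) ∨ cu = 1 / (K + 1) - 1))) := fun huv hvw => by
    have hq : cw = 0 ∨ cw = 1 / (K + 1) := by
      apply quad_aux K cw hKpos
      rw [huv, hvw] at h1; linarith [h1]
    rcases hq with h' | h'
    · exact Or.inl ⟨by rw [huv, hvw, h'], by rw [hvw, h'], Or.inl h'⟩
    · exact Or.inr (Or.inr (Or.inr (Or.inl ⟨by rw [huv, hvw, h'], by rw [hvw, h'], Or.inl h'⟩)))
  rcases mul_eq_zero.mp fA with dA | eA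
  · -- cv = cw
    have hvw : cv = cw := by linarith
    rcases mul_eq_zero.mp fB with dB | eB
    · exact allEq (by linarith) hvw
    · -- 2K cv - 1 + cu + cw = 0, cv = cw
      have hq : cw = 0 ∨ cw = 1 / (K + 1) := by
        apply quad_aux K cw hKpos
        rw [hvw] at h3; linarith [h3]
      rcases hq with h' | h'
      · -- cv = cw = 0, cu = 1
        refine Or.inr (Or.inr (Or.inl ⟨by rw [hvw, h'], h', Or.inr ?_⟩))
        rw [hvw, h'] at eB; linarith
      · -- cv = cw = 1/(K+1), cu = 1/(K+1) - 1
        refine Or.inr (Or.inr (Or.inr (Or.inr (Or.inr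
          ⟨by rw [hvw, h'], h', Or.inr ?_⟩))))
        rw [hvw, h'] at eB
        field_simp at eB ⊢
        linarith
  · rcases mul_eq_zero.mp fB with dB | eB
    · -- cu = cw, eA
      have huw : cu = cw := by linarith
      rcases mul_eq_zero.mp fC with dC | eC
      · exact allEq (by linarith) (by linarith)
      · have hq : cw = 0 ∨ cw = 1 / (K + 1) := by
          apply quad_aux K cw hKpos
          rw [huw] at h2; linarith [h2]
        rcases hq with h' | h'
        · refine Or.inr (Or.inl ⟨by rw [huw, h'], h', Or.inr ?_⟩)
          rw [huw, h'] at eA; linarith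
        · refine Or.inr (Or.inr (Or.inr (Or.inr (Or.inl
            ⟨by rw [huw, h'], h', Or.inr ?_⟩))))
          rw [huw, h'] at eA
          field_simp at eA ⊢
          linarith
    · rcases mul_eq_zero.mp fC with dC | eC
      · -- cu = cv, eA
        have huv : cu = cv := by linarith
        have hq : cv = 0 ∨ cv = 1 / (K + 1) := by
          apply quad_aux K cv hKpos
          rw [huv] at h1; linarith [h1]
        rcases hq with h' | h'
        · refine Or.inl ⟨by rw [huv, h'], h', Or.inr ?_⟩
          rw [huv, h'] at eA; linarith
        · refine Or.inr (Or.inr (Or.inr (Or.inl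
            ⟨by rw [huv, h'], h', Or.inr ?_⟩)))
          rw [huv, h'] at eA
          field_simp at eA ⊢
          linarith
      · -- all three linear equations: forces all equal
        have huv : cu = cv := by nlinarith [eA, eB]
        have hvw : cv = cw := by nlinarith [eB, eC]
        exact allEq huv hvw
end

section
/- Let X be a k-dimensional (r⃗, δ⃗, γ)-eposet and 1 ≤ j ≤ ℓ+1 ≤ k. Then ‖D U^j − r^ℓ_j U^{j−1} − δ^ℓ_j U^j D‖ = O(γ), where δ^ℓ_0 = 1, δ^ℓ_j = Π_{t=ℓ−j+1}^{ℓ} δ_t, and r^ℓ_j = Σ_{t=0}^{j−1} r_{ℓ−t} δ^ℓ_t, with the implied constant depending only on k, r⃗, δ⃗. -/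
open Finset

noncomputable section

/-- A measured graded poset of dimension `d`: a finite graded poset with a
unique minimum element (of shifted rank `0`, corresponding to rank `-1` in the
paper), pure with all maximal elements of shifted rank `d+1`, equipped with a
coupled sequence of distributions on the levels, described by the marginals `π`
together with a downward Markov kernel `K` supported on covering pairs. -/
structure MeasuredPoset (α : Type) [Fintype α] [PartialOrder α] (d : ℕ) : Type where
  rank : α → ℕ
  rank_le_of_le : ∀ x y : α, x ≤ y → rank x ≤ rank y
  rank_covby : ∀ x y : α, x ⋖ y → rank y = rank x + 1
  bot : α
  bot_le : ∀ x : α, bot ≤ x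
  rank_bot : rank bot = 0
  rank_le : ∀ x : α, rank x ≤ d + 1
  pure' : ∀ x : α, ∃ y : α, x ≤ y ∧ rank y = d + 1
  π : α → ℝ
  π_nonneg : ∀ x, 0 ≤ π x
  π_sum : ∀ j, j ≤ d + 1 → ∑ x ∈ Finset.univ.filter (fun x => rank x = j), π x = 1
  K : α → α → ℝ
  K_nonneg : ∀ s t, 0 ≤ K s t
  K_supp : ∀ s t, K s t ≠ 0 → t ⋖ s
  K_sum : ∀ s : α, 1 ≤ rank s → ∑ t : α, K s t = 1
  π_compat : ∀ t : α, rank t ≤ d →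
    π t = ∑ s ∈ Finset.univ.filter (fun x => rank x = rank t + 1), π s * K s t

namespace MeasuredPoset

variable {α : Type} [Fintype α] [PartialOrder α] {d : ℕ} (P : MeasuredPoset α d)

/-- The elements of shifted rank `j` (the level `X(j-1)` in the paper). -/
def level (j : ℕ) : Finset α := Finset.univ.filter (fun x => P.rank x = j)

/-- The weighted inner product on functions on the level of shifted rank `j`. -/
def ip (j : ℕ) (f g : α → ℝ) : ℝ := ∑ x ∈ P.level j, P.π x * f x * g x

/-- The up (averaging) operator: `(U g)(s) = E[g(t) | t ⋖ s]`. -/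
def up (g : α → ℝ) : α → ℝ := fun s => ∑ t : α, P.K s t * g t

/-- The down (averaging) operator: `(D f)(t) = E[f(s) | s ⋗ t]`. -/
def down (f : α → ℝ) : α → ℝ :=
  fun t => (∑ s ∈ P.level (P.rank t + 1), P.π s * P.K s t * f s) / P.π t

/-- `m`-fold iterate of the up operator. -/
def upIter : ℕ → (α → ℝ) → (α → ℝ)
  | 0, g => g
  | (m + 1), g => P.up (upIter m g)

/-- The eposet defect operator at paper level `j` (shifted rank `j+1`):
`(D_{j+1}U_j − r_j I − δ_j U_{j-1}D_j) f`. -/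
def eposetDefect (r δ : ℕ → ℝ) (j : ℕ) (f : α → ℝ) : α → ℝ :=
  fun x => P.down (P.up f) x - r j * f x - δ j * P.up (P.down f) x

/-- `P` is an `(r, δ, γ)`-expanding poset (eposet):
`‖D_{j+1}U_j − r_j I − δ_j U_{j-1}D_j‖ ≤ γ` for all paper levels
`0 ≤ j ≤ d-1`, expressed via the weighted quadratic forms. -/
def IsEposet (r δ : ℕ → ℝ) (γ : ℝ) : Prop :=
  ∀ j, j + 1 ≤ d → ∀ f : α → ℝ,
    P.ip (j + 1) (P.eposetDefect r δ j f) (P.eposetDefect r δ j f)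
      ≤ γ ^ 2 * P.ip (j + 1) f f

/-- `h` is harmonic at shifted rank `j`: an element of `H^{j-1} = ker D_{j-1}`
(for `j = 0` this is all of `C^{-1}`). -/
def Harmonic (j : ℕ) (h : α → ℝ) : Prop :=
  (∀ x, P.rank x ≠ j → h x = 0) ∧
  (1 ≤ j → ∀ t ∈ P.level (j - 1), P.down h t = 0)

/-- The laziness of the lower random walk `U D` on the level of shifted rank
`j`: the probability that two consecutive steps coincide. -/
def laziness (j : ℕ) : ℝ :=
  ∑ x ∈ P.level j, P.π x * ∑ t : α, P.K x t * (P.π x * P.K x t / P.π t)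

end MeasuredPoset

/-- The coefficient `δ^ℓ_j = ∏_{t=ℓ-j+1}^{ℓ} δ_t` (with `δ^ℓ_0 = 1`). -/
def deltaIter (δ : ℕ → ℝ) (ℓ j : ℕ) : ℝ := ∏ t ∈ Finset.Icc (ℓ + 1 - j) ℓ, δ t

/-- The coefficient `r^ℓ_j = ∑_{t=0}^{j-1} r_{ℓ-t} δ^ℓ_t` (with `r^ℓ_0 = 1`). -/
def rIter (r δ : ℕ → ℝ) (ℓ : ℕ) : ℕ → ℝ
  | 0 => 1
  | (j + 1) => ∑ t ∈ Finset.range (j + 1), r (ℓ - t) * deltaIter δ ℓ t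

/-- The coefficient `ρ^ℓ_m = ∏_{t=0}^{m} r^{ℓ-t}_{m-t}`. -/
def rhoIter (r δ : ℕ → ℝ) (ℓ m : ℕ) : ℝ :=
  ∏ t ∈ Finset.range (m + 1), rIter r δ (ℓ - t) (m - t)

namespace MeasuredPosetAux

section Lemmas

variable {α : Type} [Fintype α] [PartialOrder α] {d : ℕ} (P : MeasuredPoset α d)

lemma ip_nonneg (j : ℕ) (f : α → ℝ) : 0 ≤ P.ip j f f := by
  refine Finset.sum_nonneg fun x _ => ?_
  rw [mul_assoc]
  exact mul_nonneg (P.π_nonneg x) (mul_self_nonneg _)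

lemma ip_sq_le (j : ℕ) (a b : α → ℝ) : (P.ip j a b)^2 ≤ P.ip j a a * P.ip j b b := by
  have h := Finset.sum_mul_sq_le_sq_mul_sq (P.level j)
      (fun x => Real.sqrt (P.π x) * a x) (fun x => Real.sqrt (P.π x) * b x)
  have e1 : P.ip j a b = ∑ x ∈ P.level j,
      (Real.sqrt (P.π x) * a x) * (Real.sqrt (P.π x) * b x) := by
    refine Finset.sum_congr rfl fun x _ => ?_
    rw [show (Real.sqrt (P.π x) * a x) * (Real.sqrt (P.π x) * b x)
        = (Real.sqrt (P.π x) * Real.sqrt (P.π x)) * (a x * b x) by ring,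
      Real.mul_self_sqrt (P.π_nonneg x)]
    ring
  have e2 : P.ip j a a = ∑ x ∈ P.level j, (Real.sqrt (P.π x) * a x)^2 := by
    refine Finset.sum_congr rfl fun x _ => ?_
    rw [mul_pow, Real.sq_sqrt (P.π_nonneg x)]; ring
  have e3 : P.ip j b b = ∑ x ∈ P.level j, (Real.sqrt (P.π x) * b x)^2 := by
    refine Finset.sum_congr rfl fun x _ => ?_
    rw [mul_pow, Real.sq_sqrt (P.π_nonneg x)]; ring
  rw [e1, e2, e3]
  exact h

lemma ip_add_le (j : ℕ) (a b : α → ℝ) {A B : ℝ} (hA : 0 ≤ A) (hB : 0 ≤ B)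
    (ha : P.ip j a a ≤ A^2) (hb : P.ip j b b ≤ B^2) :
    P.ip j (fun x => a x + b x) (fun x => a x + b x) ≤ (A+B)^2 := by
  have hab : P.ip j a b ≤ A * B := by
    have h1 := ip_sq_le P j a b
    have h2 : (P.ip j a b)^2 ≤ (A*B)^2 := by
      nlinarith [ip_nonneg P j a, ip_nonneg P j b]
    nlinarith [mul_nonneg hA hB]
  have expand : P.ip j (fun x => a x + b x) (fun x => a x + b x)
      = P.ip j a a + 2 * P.ip j a b + P.ip j b b := by
    have hpt : ∀ x : α, P.π x * (a x + b x) * (a x + b x)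
        = P.π x * a x * a x + 2*(P.π x * a x * b x) + P.π x * b x * b x := fun x => by ring
    simp only [MeasuredPoset.ip, hpt, Finset.sum_add_distrib, Finset.mul_sum]
  rw [expand]
  nlinarith

lemma ip_smul (j : ℕ) (c : ℝ) (f : α → ℝ) :
    P.ip j (fun x => c * f x) (fun x => c * f x) = c^2 * P.ip j f f := by
  simp only [MeasuredPoset.ip, Finset.mul_sum]
  exact Finset.sum_congr rfl fun x _ => by ring

lemma up_contract (m : ℕ) (hm : m ≤ d) (g : α → ℝ) :
    P.ip (m+1) (P.up g) (P.up g) ≤ P.ip m g g := by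
  have step1 : P.ip (m+1) (P.up g) (P.up g)
      ≤ ∑ s ∈ P.level (m+1), P.π s * ∑ t : α, P.K s t * (g t)^2 := by
    refine Finset.sum_le_sum fun s hs => ?_
    have hrank : P.rank s = m + 1 := by
      simpa [MeasuredPoset.level] using hs
    have hK1 : ∑ t : α, P.K s t = 1 := P.K_sum s (by omega)
    have cs : (∑ t : α, P.K s t * g t)^2 ≤ ∑ t : α, P.K s t * (g t)^2 := by
      have h := Finset.sum_mul_sq_le_sq_mul_sq Finset.univ
        (fun t => Real.sqrt (P.K s t)) (fun t => Real.sqrt (P.K s t) * g t)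
      have e1 : ∑ t : α, Real.sqrt (P.K s t) * (Real.sqrt (P.K s t) * g t)
          = ∑ t : α, P.K s t * g t :=
        Finset.sum_congr rfl fun t _ => by
          rw [← mul_assoc, Real.mul_self_sqrt (P.K_nonneg s t)]
      have e2 : ∑ t : α, (Real.sqrt (P.K s t))^2 = 1 := by
        rw [← hK1]
        exact Finset.sum_congr rfl fun t _ => Real.sq_sqrt (P.K_nonneg s t)
      have e3 : ∑ t : α, (Real.sqrt (P.K s t) * g t)^2 = ∑ t : α, P.K s t * (g t)^2 :=
        Finset.sum_congr rfl fun t _ => by rw [mul_pow, Real.sq_sqrt (P.K_nonneg s t)]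
      rw [e1, e2, e3, one_mul] at h
      exact h
    have hπ := P.π_nonneg s
    calc P.π s * P.up g s * P.up g s = P.π s * (∑ t : α, P.K s t * g t)^2 := by
          rw [show P.up g s = ∑ t : α, P.K s t * g t from rfl]; ring
      _ ≤ P.π s * ∑ t : α, P.K s t * (g t)^2 := mul_le_mul_of_nonneg_left cs hπ
  have swap : ∑ s ∈ P.level (m+1), P.π s * ∑ t : α, P.K s t * (g t)^2
      = ∑ t : α, (∑ s ∈ P.level (m+1), P.π s * P.K s t) * (g t)^2 := by
    simp only [Finset.mul_sum, Finset.sum_mul]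
    rw [Finset.sum_comm]
    exact Finset.sum_congr rfl fun t _ => Finset.sum_congr rfl fun s _ => by ring
  have hzero : ∀ t : α, t ∉ P.level m →
      (∑ s ∈ P.level (m+1), P.π s * P.K s t) * (g t)^2 = 0 := by
    intro t ht
    have hz : ∑ s ∈ P.level (m+1), P.π s * P.K s t = 0 := by
      refine Finset.sum_eq_zero fun s hs => ?_
      by_cases hk : P.K s t = 0
      · rw [hk, mul_zero]
      · exfalso
        have hcov := P.K_supp s t hk
        have hrc := P.rank_covby t s hcov
        have hrs : P.rank s = m + 1 := by simpa [MeasuredPoset.level] using hs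
        have hrt : ¬ P.rank t = m := by simpa [MeasuredPoset.level] using ht
        omega
    rw [hz, zero_mul]
  have step2 : ∑ s ∈ P.level (m+1), P.π s * ∑ t : α, P.K s t * (g t)^2 = P.ip m g g := by
    rw [swap]
    rw [← Finset.sum_subset (Finset.subset_univ (P.level m)) (fun t _ ht => hzero t ht)]
    refine Finset.sum_congr rfl fun t ht => ?_
    have hrt : P.rank t = m := by simpa [MeasuredPoset.level] using ht
    have hc := P.π_compat t (by omega)
    rw [hrt] at hc
    have hc' : P.π t = ∑ s ∈ P.level (m+1), P.π s * P.K s t := hc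
    rw [hc']
    ring
  exact step1.trans (le_of_eq step2)

lemma upIter_contract (g : α → ℝ) (i m : ℕ) (h : m + i ≤ d + 1) :
    P.ip (m+i) (P.upIter i g) (P.upIter i g) ≤ P.ip m g g := by
  induction i with
  | zero => exact le_of_eq rfl
  | succ n ih =>
    have h1 := up_contract P (m+n) (by omega) (P.upIter n g)
    exact le_trans h1 (ih (by omega))

lemma up_sub_sub (a b c : α → ℝ) (s t : ℝ) (x : α) :
    P.up (fun y => a y - s * b y - t * c y) x
      = P.up a x - s * P.up b x - t * P.up c x := by
  simp only [MeasuredPoset.up, Finset.mul_sum, mul_sub, ← Finset.sum_sub_distrib]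
  exact Finset.sum_congr rfl fun y _ => by ring

end Lemmas

lemma deltaIter_zero (δ : ℕ → ℝ) (ℓ : ℕ) : deltaIter δ ℓ 0 = 1 := by
  unfold deltaIter
  rw [Finset.Icc_eq_empty (by omega), Finset.prod_empty]

lemma deltaIter_one (δ : ℕ → ℝ) (ℓ : ℕ) : deltaIter δ ℓ 1 = δ ℓ := by
  unfold deltaIter
  rw [show ℓ + 1 - 1 = ℓ from by omega, Finset.Icc_self, Finset.prod_singleton]

lemma rIter_one (r δ : ℕ → ℝ) (ℓ : ℕ) : rIter r δ ℓ 1 = r ℓ := by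
  simp [rIter, deltaIter_zero]

lemma deltaIter_succ_succ (δ : ℕ → ℝ) (ℓ n : ℕ) :
    deltaIter δ (ℓ+1) (n+1) = δ (ℓ+1) * deltaIter δ ℓ n := by
  unfold deltaIter
  rw [show ℓ + 1 + 1 - (n+1) = ℓ + 1 - n from by omega,
    Finset.prod_Icc_succ_top (by omega : ℓ + 1 - n ≤ ℓ + 1)]
  ring

lemma rIter_succ_succ (r δ : ℕ → ℝ) (ℓ n : ℕ) :
    rIter r δ (ℓ+1) (n+2) = r (ℓ+1) + δ (ℓ+1) * rIter r δ ℓ (n+1) := by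
  have hterm : ∀ i, r (ℓ+1-(i+1)) * deltaIter δ (ℓ+1) (i+1)
      = δ (ℓ+1) * (r (ℓ-i) * deltaIter δ ℓ i) := by
    intro i
    rw [deltaIter_succ_succ, show ℓ + 1 - (i+1) = ℓ - i from by omega]
    ring
  simp only [rIter]
  rw [Finset.sum_range_succ']
  simp only [hterm]
  rw [← Finset.mul_sum, deltaIter_zero]
  simp only [Nat.sub_zero]
  ring

/-- The generalized defect function. -/
def gdef {α : Type} [Fintype α] [PartialOrder α] {d : ℕ} (P : MeasuredPoset α d)
    (r δ : ℕ → ℝ) (ℓ j : ℕ) (f : α → ℝ) : α → ℝ :=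
  fun x => P.down (P.upIter j f) x - rIter r δ ℓ j * P.upIter (j - 1) f x
    - deltaIter δ ℓ j * P.upIter j (P.down f) x

lemma key {α : Type} [Fintype α] [PartialOrder α] {k : ℕ} (P : MeasuredPoset α k)
    (r δ : ℕ → ℝ) (γ : ℝ) (hγ : 0 ≤ γ) (hE : P.IsEposet r δ γ)
    (D : ℝ) (hD0 : 0 ≤ D) (hD : ∀ t, t ≤ k → |δ t| ≤ D) :
    ∀ n ℓ : ℕ, n ≤ ℓ → ℓ + 1 ≤ k → ∀ f : α → ℝ,
      P.ip (ℓ+1) (gdef P r δ ℓ (n+1) f) (gdef P r δ ℓ (n+1) f)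
        ≤ ((1+D)^(n+1) * γ)^2 * P.ip (ℓ+1-n) f f := by
  intro n
  induction n with
  | zero =>
    intro ℓ hn hk f
    have hg : gdef P r δ ℓ 1 f = P.eposetDefect r δ ℓ f := by
      funext x
      simp only [gdef, MeasuredPoset.eposetDefect, rIter_one, deltaIter_one,
        show (1:ℕ) - 1 = 0 from rfl, MeasuredPoset.upIter]
    rw [hg]
    have h1 := hE ℓ (by omega) f
    have h2 : γ^2 ≤ ((1+D)^1 * γ)^2 := by
      rw [pow_one]
      nlinarith [sq_nonneg γ, mul_nonneg hD0 (sq_nonneg γ),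
        mul_nonneg (mul_nonneg hD0 hD0) (sq_nonneg γ)]
    have h3 := ip_nonneg P (ℓ+1) f
    calc P.ip (ℓ+1) (P.eposetDefect r δ ℓ f) (P.eposetDefect r δ ℓ f)
        ≤ γ^2 * P.ip (ℓ+1) f f := h1
      _ ≤ ((1+D)^(0+1) * γ)^2 * P.ip (ℓ+1-0) f f := by
          exact mul_le_mul_of_nonneg_right (by simpa using h2) h3
  | succ n ih =>
    intro ℓ hn hk f
    obtain ⟨ℓ', rfl⟩ : ∃ ℓ'', ℓ = ℓ'' + 1 := ⟨ℓ - 1, by omega⟩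
    set g : α → ℝ := P.upIter (n+1) f with hgdef
    set E' : α → ℝ := gdef P r δ ℓ' (n+1) f with hE'def
    set adef : α → ℝ := P.eposetDefect r δ (ℓ'+1) g with hadef
    set bdef : α → ℝ := fun x => δ (ℓ'+1) * P.up E' x with hbdef
    set Q : ℝ := P.ip (ℓ'+1-n) f f with hQdef
    have hQ0 : 0 ≤ Q := ip_nonneg P _ f
    set S : ℝ := Real.sqrt Q with hSdef
    have hS0 : 0 ≤ S := Real.sqrt_nonneg _
    have hS : S^2 = Q := Real.sq_sqrt hQ0
    -- pointwise decomposition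
    have hsplit : gdef P r δ (ℓ'+1) (n+2) f = fun x => adef x + bdef x := by
      funext x
      have hb : P.up E' x
          = P.up (P.down (P.upIter (n+1) f)) x - rIter r δ ℓ' (n+1) * P.up (P.upIter n f) x
            - deltaIter δ ℓ' (n+1) * P.up (P.upIter (n+1) (P.down f)) x :=
        up_sub_sub P (P.down (P.upIter (n+1) f)) (P.upIter n f)
          (P.upIter (n+1) (P.down f)) (rIter r δ ℓ' (n+1)) (deltaIter δ ℓ' (n+1)) x
      simp only [gdef, hadef, hbdef, MeasuredPoset.eposetDefect, hgdef]
      rw [hb, rIter_succ_succ, deltaIter_succ_succ]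
      simp only [MeasuredPoset.upIter, Nat.add_sub_cancel, show n + 2 - 1 = n + 1 from by omega]
      ring
    -- bound on adef
    have ha : P.ip (ℓ'+1+1) adef adef ≤ (γ*S)^2 := by
      have h1 := hE (ℓ'+1) (by omega) g
      have h2 := upIter_contract P f (n+1) (ℓ'+1-n) (by omega)
      rw [show ℓ'+1-n+(n+1) = ℓ'+1+1 from by omega] at h2
      have h3 : (γ*S)^2 = γ^2 * Q := by rw [mul_pow, hS]
      rw [h3]
      calc P.ip (ℓ'+1+1) adef adef ≤ γ^2 * P.ip (ℓ'+1+1) g g := h1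
        _ ≤ γ^2 * Q := by nlinarith [sq_nonneg γ]
    -- bound on bdef
    have hb2 : P.ip (ℓ'+1+1) bdef bdef
        ≤ (|δ (ℓ'+1)| * ((1+D)^(n+1) * γ) * S)^2 := by
      have e := ip_smul P (ℓ'+1+1) (δ (ℓ'+1)) (P.up E')
      have h1 := up_contract P (ℓ'+1) (by omega) E'
      have h2 := ih ℓ' (by omega) (by omega) f
      have habs : |δ (ℓ'+1)|^2 = (δ (ℓ'+1))^2 := sq_abs _
      have hfin : (|δ (ℓ'+1)| * ((1+D)^(n+1) * γ) * S)^2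
          = (δ (ℓ'+1))^2 * (((1+D)^(n+1) * γ)^2 * Q) := by
        rw [← hS, ← habs]; ring
      calc P.ip (ℓ'+1+1) bdef bdef
          = (δ (ℓ'+1))^2 * P.ip (ℓ'+1+1) (P.up E') (P.up E') := e
        _ ≤ (δ (ℓ'+1))^2 * P.ip (ℓ'+1) E' E' := by nlinarith [sq_nonneg (δ (ℓ'+1))]
        _ ≤ (δ (ℓ'+1))^2 * (((1+D)^(n+1) * γ)^2 * Q) := by
            nlinarith [sq_nonneg (δ (ℓ'+1))]
        _ = (|δ (ℓ'+1)| * ((1+D)^(n+1) * γ) * S)^2 := hfin.symm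
    -- combine
    have hApos : 0 ≤ γ * S := mul_nonneg hγ hS0
    have hpow0 : (0:ℝ) ≤ (1+D)^(n+1) := by positivity
    have hBpos : 0 ≤ |δ (ℓ'+1)| * ((1+D)^(n+1) * γ) * S :=
      mul_nonneg (mul_nonneg (abs_nonneg _) (mul_nonneg hpow0 hγ)) hS0
    have hcomb := ip_add_le P (ℓ'+1+1) adef bdef hApos hBpos ha hb2
    rw [hsplit]
    refine le_trans hcomb ?_
    rw [show ℓ'+1+1-(n+1) = ℓ'+1-n from by omega, ← hQdef, ← hS, show (S:ℝ)^2 = S^2 from rfl]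
    have hδ : |δ (ℓ'+1)| ≤ D := hD (ℓ'+1) (by omega)
    have hone : (1:ℝ) ≤ (1+D)^(n+1) := one_le_pow₀ (by linarith)
    have hco : γ*S + |δ (ℓ'+1)| * ((1+D)^(n+1) * γ) * S ≤ (1+D)^(n+1+1) * γ * S := by
      rw [show (1+D)^(n+1+1) = (1+D)^(n+1)*(1+D) from pow_succ _ _]
      have u : 0 ≤ γ * S := mul_nonneg hγ hS0
      nlinarith [mul_nonneg (sub_nonneg.mpr hone) u,
        mul_nonneg (mul_nonneg (sub_nonneg.mpr hδ) hpow0) u]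
    calc (γ*S + |δ (ℓ'+1)| * ((1+D)^(n+1) * γ) * S)^2
        ≤ ((1+D)^(n+1+1) * γ * S)^2 := by
          refine pow_le_pow_left₀ (by positivity) hco 2
      _ = ((1+D)^(n+1+1) * γ)^2 * S^2 := by ring

end MeasuredPosetAux

open MeasuredPosetAux

/-- In a `k`-dimensional `(r, δ, γ)`-eposet,
`‖D U^j − r^ℓ_j U^{j-1} − δ^ℓ_j U^j D‖ = O(γ)` for all `1 ≤ j ≤ ℓ+1 ≤ k`,
with the implied constant depending only on `k`, `r`, `δ`. -/
theorem generalized_up_down_relation (k : ℕ) (r δ : ℕ → ℝ) :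
    ∃ C : ℝ, 0 < C ∧
      ∀ (α : Type) [Fintype α] [PartialOrder α],
        ∀ (P : MeasuredPoset α k) (γ : ℝ), 0 ≤ γ → P.IsEposet r δ γ →
        ∀ ℓ j : ℕ, 1 ≤ j → j ≤ ℓ + 1 → ℓ + 1 ≤ k → ∀ f : α → ℝ,
          P.ip (ℓ + 1)
            (fun x => P.down (P.upIter j f) x - rIter r δ ℓ j * P.upIter (j - 1) f x
              - deltaIter δ ℓ j * P.upIter j (P.down f) x)
            (fun x => P.down (P.upIter j f) x - rIter r δ ℓ j * P.upIter (j - 1) f x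
              - deltaIter δ ℓ j * P.upIter j (P.down f) x)
          ≤ (C * γ) ^ 2 * P.ip (ℓ + 2 - j) f f := by
  set D : ℝ := ∑ t ∈ Finset.range (k+1), |δ t| with hDdef
  have hD0 : 0 ≤ D := Finset.sum_nonneg fun t _ => abs_nonneg _
  refine ⟨(1+D)^k, by positivity, ?_⟩
  intro α _ _ P γ hγ hE ℓ j hj1 hjℓ hℓk f
  obtain ⟨n, rfl⟩ : ∃ n, j = n + 1 := ⟨j - 1, by omega⟩
  have hD : ∀ t, t ≤ k → |δ t| ≤ D := fun t ht =>
    Finset.single_le_sum (f := fun i => |δ i|) (fun i _ => abs_nonneg _)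
      (Finset.mem_range.mpr (by omega))
  have hkey := key P r δ γ hγ hE D hD0 hD n ℓ (by omega) hℓk f
  rw [show ℓ + 2 - (n+1) = ℓ + 1 - n from by omega]
  have h1 : (1+D)^(n+1) ≤ (1+D)^k := pow_le_pow_right₀ (by linarith) (by omega)
  have h2 : (0:ℝ) ≤ (1+D)^(n+1) := by positivity
  have h3 := ip_nonneg P (ℓ+1-n) f
  have h4 : ((1+D)^(n+1) * γ)^2 ≤ ((1+D)^k * γ)^2 :=
    pow_le_pow_left₀ (mul_nonneg h2 hγ) (mul_le_mul_of_nonneg_right h1 hγ) 2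
  calc P.ip (ℓ + 1)
        (fun x => P.down (P.upIter (n+1) f) x - rIter r δ ℓ (n+1) * P.upIter (n+1-1) f x
          - deltaIter δ ℓ (n+1) * P.upIter (n+1) (P.down f) x)
        (fun x => P.down (P.upIter (n+1) f) x - rIter r δ ℓ (n+1) * P.upIter (n+1-1) f x
          - deltaIter δ ℓ (n+1) * P.upIter (n+1) (P.down f) x)
      = P.ip (ℓ+1) (gdef P r δ ℓ (n+1) f) (gdef P r δ ℓ (n+1) f) := rfl
    _ ≤ ((1+D)^(n+1) * γ)^2 * P.ip (ℓ+1-n) f f := hkey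
    _ ≤ ((1+D)^k * γ)^2 * P.ip (ℓ+1-n) f f := mul_le_mul_of_nonneg_right h4 h3
end
end

section
/- Let X be a k-dimensional (r⃗, δ⃗, γ)-eposet, ℓ < k, i ≠ j, and f_i = U^{ℓ−i} h_i, f_j = U^{ℓ−j} h_j with h_i ∈ ker D_i, h_j ∈ ker D_j. Then |⟨f_i, f_j⟩| = O(γ)·‖h_i‖·‖h_j‖, with constant depending only on k, r⃗, δ⃗. -/
open Finset

noncomputable section

namespace ApproxOrtho

open MeasuredPoset RealInnerProductSpace

variable {α : Type} [Fintype α] [PartialOrder α] {k : ℕ}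

/-- `f` is supported on the level of shifted rank `j`. -/
def Supp (P : MeasuredPoset α k) (j : ℕ) (f : α → ℝ) : Prop :=
  ∀ x, P.rank x ≠ j → f x = 0

/-- Embedding of level-`j` functions into Euclidean space, rescaled by `√π`. -/
def E (P : MeasuredPoset α k) (j : ℕ) (f : α → ℝ) : EuclideanSpace ℝ α :=
  WithLp.toLp 2 (fun x => if P.rank x = j then Real.sqrt (P.π x) * f x else 0)

lemma ip_eq (P : MeasuredPoset α k) (j : ℕ) (f g : α → ℝ) :
    P.ip j f g = ⟪E P j f, E P j g⟫ := by
  simp only [MeasuredPoset.ip, MeasuredPoset.level, PiLp.inner_apply,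
    RCLike.inner_apply, starRingEnd_apply, star_trivial, Finset.sum_filter]
  refine Finset.sum_congr rfl fun x _ => ?_
  by_cases hx : P.rank x = j
  · simp only [E, PiLp.toLp_apply, hx, if_pos rfl, if_true]
    rw [show Real.sqrt (P.π x) * g x * (Real.sqrt (P.π x) * f x)
        = Real.sqrt (P.π x) * Real.sqrt (P.π x) * f x * g x by ring,
      Real.mul_self_sqrt (P.π_nonneg x)]
  · simp [E, hx]

lemma sqrt_ip (P : MeasuredPoset α k) (j : ℕ) (f : α → ℝ) :
    Real.sqrt (P.ip j f f) = ‖E P j f‖ := by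
  rw [ip_eq, norm_eq_sqrt_real_inner]

lemma abs_ip_le (P : MeasuredPoset α k) (j : ℕ) (f g : α → ℝ) :
    |P.ip j f g| ≤ ‖E P j f‖ * ‖E P j g‖ := by
  rw [ip_eq]; exact abs_real_inner_le_norm _ _

lemma ip_comm (P : MeasuredPoset α k) (j : ℕ) (f g : α → ℝ) :
    P.ip j f g = P.ip j g f := by
  unfold MeasuredPoset.ip
  exact Finset.sum_congr rfl fun x _ => by ring

lemma E_sub_smul (P : MeasuredPoset α k) (j : ℕ) (c : ℝ) (f g : α → ℝ) :
    E P j (fun x => f x - c * g x) = E P j f - c • E P j g := by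
  ext x
  simp only [E, PiLp.sub_apply, PiLp.smul_apply, smul_eq_mul, PiLp.toLp_apply]
  split <;> ring

lemma E_add_smul (P : MeasuredPoset α k) (j : ℕ) (c : ℝ) (f g : α → ℝ) :
    E P j (fun x => f x + c * g x) = E P j f + c • E P j g := by
  ext x
  simp only [E, PiLp.add_apply, PiLp.smul_apply, smul_eq_mul, PiLp.toLp_apply]
  split <;> ring

/-- Weighted Cauchy–Schwarz: `(∑ w f)² ≤ (∑ w) (∑ w f²)`. -/
lemma weighted_cs {β : Type*} (s : Finset β) (w f : β → ℝ) (hw : ∀ i ∈ s, 0 ≤ w i) :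
    (∑ i ∈ s, w i * f i) ^ 2 ≤ (∑ i ∈ s, w i) * (∑ i ∈ s, w i * f i ^ 2) := by
  calc (∑ i ∈ s, w i * f i) ^ 2
      = (∑ i ∈ s, Real.sqrt (w i) * (Real.sqrt (w i) * f i)) ^ 2 := by
        congr 1
        refine Finset.sum_congr rfl fun i hi => ?_
        rw [← mul_assoc, Real.mul_self_sqrt (hw i hi)]
    _ ≤ (∑ i ∈ s, Real.sqrt (w i) ^ 2) * (∑ i ∈ s, (Real.sqrt (w i) * f i) ^ 2) :=
        sum_mul_sq_le_sq_mul_sq s _ _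
    _ = (∑ i ∈ s, w i) * (∑ i ∈ s, w i * f i ^ 2) := by
        congr 1
        · exact Finset.sum_congr rfl fun i hi => Real.sq_sqrt (hw i hi)
        · refine Finset.sum_congr rfl fun i hi => ?_
          rw [mul_pow, Real.sq_sqrt (hw i hi)]

end ApproxOrtho
namespace ApproxOrtho

open MeasuredPoset

variable {α : Type} [Fintype α] [PartialOrder α] {k : ℕ}

lemma supp_up (P : MeasuredPoset α k) {j : ℕ} {g : α → ℝ} (hg : Supp P j g) :
    Supp P (j + 1) (P.up g) := by
  intro x hx
  unfold MeasuredPoset.up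
  refine Finset.sum_eq_zero fun t _ => ?_
  by_cases hK : P.K x t = 0
  · rw [hK, zero_mul]
  by_cases hgt : g t = 0
  · rw [hgt, mul_zero]
  have hrt : P.rank t = j := by by_contra h; exact hgt (hg t h)
  have := P.rank_covby t x (P.K_supp x t hK)
  omega

lemma supp_down (P : MeasuredPoset α k) {j : ℕ} {f : α → ℝ} (hf : Supp P (j + 1) f) :
    Supp P j (P.down f) := by
  intro t ht
  unfold MeasuredPoset.down
  rw [Finset.sum_eq_zero, zero_div]
  intro s hs
  rw [MeasuredPoset.level, Finset.mem_filter] at hs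
  rw [hf s (by omega), mul_zero]

lemma down_of_supp_zero (P : MeasuredPoset α k) {f : α → ℝ} (hf : Supp P 0 f) :
    P.down f = 0 := by
  funext t
  show (_ / _ : ℝ) = 0
  rw [Finset.sum_eq_zero, zero_div]
  intro s hs
  rw [MeasuredPoset.level, Finset.mem_filter] at hs
  rw [hf s (by omega), mul_zero]

lemma supp_sub_smul (P : MeasuredPoset α k) {j : ℕ} (c : ℝ) {f g : α → ℝ}
    (hf : Supp P j f) (hg : Supp P j g) : Supp P j (fun x => f x - c * g x) := by
  intro x hx
  show f x - c * g x = 0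
  rw [hf x hx, hg x hx]; ring

lemma supp_upIter (P : MeasuredPoset α k) {j : ℕ} {g : α → ℝ} (hg : Supp P j g) :
    ∀ n, Supp P (j + n) (P.upIter n g)
  | 0 => hg
  | (n + 1) => by
      have := supp_up P (supp_upIter P hg n)
      rwa [show j + n + 1 = j + (n+1) by ring] at this

lemma up_zero (P : MeasuredPoset α k) : P.up 0 = 0 := by
  funext s; simp [MeasuredPoset.up]

lemma up_sub_smul (P : MeasuredPoset α k) (c : ℝ) (f g : α → ℝ) :
    P.up (fun x => f x - c * g x) = fun s => P.up f s - c * P.up g s := by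
  funext s
  simp only [MeasuredPoset.up, mul_sub, Finset.sum_sub_distrib, Finset.mul_sum]
  congr 1
  exact Finset.sum_congr rfl fun t _ => by ring

lemma down_sub_smul (P : MeasuredPoset α k) (c : ℝ) (f g : α → ℝ) :
    P.down (fun x => f x - c * g x) = fun t => P.down f t - c * P.down g t := by
  funext t
  simp only [MeasuredPoset.down]
  rw [show (∑ s ∈ P.level (P.rank t + 1), P.π s * P.K s t * (f s - c * g s))
      = (∑ s ∈ P.level (P.rank t + 1), P.π s * P.K s t * f s)
        - c * ∑ s ∈ P.level (P.rank t + 1), P.π s * P.K s t * g s by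
    rw [Finset.mul_sum, ← Finset.sum_sub_distrib]
    exact Finset.sum_congr rfl fun s _ => by ring]
  rw [sub_div, mul_div_assoc]

end ApproxOrtho
namespace ApproxOrtho

open MeasuredPoset RealInnerProductSpace

variable {α : Type} [Fintype α] [PartialOrder α] {k : ℕ}

lemma norm_E_le_of_ip (P : MeasuredPoset α k) {i j : ℕ} {f g : α → ℝ}
    (h : P.ip i f f ≤ P.ip j g g) : ‖E P i f‖ ≤ ‖E P j g‖ := by
  rw [← sqrt_ip, ← sqrt_ip]
  exact Real.sqrt_le_sqrt h

lemma ip_up_le (P : MeasuredPoset α k) {j : ℕ} (hj : j ≤ k) (g : α → ℝ) :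
    P.ip (j + 1) (P.up g) (P.up g) ≤ P.ip j g g := by
  unfold MeasuredPoset.ip
  have key : ∀ t, (∑ s ∈ P.level (j + 1), P.π s * P.K s t)
      = if P.rank t = j then P.π t else 0 := by
    intro t
    split
    · next h =>
      rw [P.π_compat t (by omega), h]
      rfl
    · next h =>
      refine Finset.sum_eq_zero fun s hs => ?_
      rw [MeasuredPoset.level, Finset.mem_filter] at hs
      by_cases hK : P.K s t = 0
      · rw [hK, mul_zero]
      have := P.rank_covby t s (P.K_supp s t hK)
      omega
  calc ∑ s ∈ P.level (j + 1), P.π s * P.up g s * P.up g s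
      ≤ ∑ s ∈ P.level (j + 1), ∑ t : α, P.π s * (P.K s t * (g t * g t)) := by
        refine Finset.sum_le_sum fun s hs => ?_
        rw [MeasuredPoset.level, Finset.mem_filter] at hs
        have hsum : ∑ t : α, P.K s t = 1 := P.K_sum s (by omega)
        have hcs := weighted_cs Finset.univ (P.K s) g (fun t _ => P.K_nonneg s t)
        rw [hsum, one_mul] at hcs
        calc P.π s * P.up g s * P.up g s
            = P.π s * (∑ t : α, P.K s t * g t) ^ 2 := by
              unfold MeasuredPoset.up; ring
          _ ≤ P.π s * ∑ t : α, P.K s t * g t ^ 2 :=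
              mul_le_mul_of_nonneg_left hcs (P.π_nonneg s)
          _ = ∑ t : α, P.π s * (P.K s t * (g t * g t)) := by
              rw [Finset.mul_sum]
              exact Finset.sum_congr rfl fun t _ => by ring
    _ = ∑ t : α, (∑ s ∈ P.level (j + 1), P.π s * P.K s t) * (g t * g t) := by
        rw [Finset.sum_comm]
        refine Finset.sum_congr rfl fun t _ => ?_
        rw [Finset.sum_mul]
        exact Finset.sum_congr rfl fun s _ => by ring
    _ = ∑ t : α, if P.rank t = j then P.π t * g t * g t else 0 := by
        refine Finset.sum_congr rfl fun t _ => ?_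
        rw [key t]
        split <;> ring
    _ = ∑ t ∈ P.level j, P.π t * g t * g t := by
        rw [MeasuredPoset.level, Finset.sum_filter]

lemma up_contract (P : MeasuredPoset α k) {j : ℕ} (hj : j ≤ k) (g : α → ℝ) :
    ‖E P (j + 1) (P.up g)‖ ≤ ‖E P j g‖ :=
  norm_E_le_of_ip P (ip_up_le P hj g)

lemma ip_down_le (P : MeasuredPoset α k) {j : ℕ} (hj : j ≤ k) (f : α → ℝ) :
    P.ip j (P.down f) (P.down f) ≤ P.ip (j + 1) f f := by
  unfold MeasuredPoset.ip
  have Gnn : ∀ t, 0 ≤ ∑ s ∈ P.level (j + 1), P.π s * P.K s t * f s ^ 2 := by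
    intro t
    refine Finset.sum_nonneg fun s _ => ?_
    have := P.π_nonneg s
    have := P.K_nonneg s t
    positivity
  calc ∑ t ∈ P.level j, P.π t * P.down f t * P.down f t
      ≤ ∑ t ∈ P.level j, ∑ s ∈ P.level (j + 1), P.π s * P.K s t * f s ^ 2 := by
        refine Finset.sum_le_sum fun t ht => ?_
        rw [MeasuredPoset.level, Finset.mem_filter] at ht
        have hrt : P.rank t = j := ht.2
        have hlev : P.level (P.rank t + 1) = P.level (j + 1) := by rw [hrt]
        set num := ∑ s ∈ P.level (j + 1), P.π s * P.K s t * f s with hnum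
        have hdown : P.down f t = num / P.π t := by
          unfold MeasuredPoset.down
          rw [hlev]
        by_cases hπ : P.π t = 0
        · rw [hdown, hπ, div_zero]
          simpa using Gnn t
        · have hπpos : 0 < P.π t := lt_of_le_of_ne (P.π_nonneg t) (Ne.symm hπ)
          have hcs := weighted_cs (P.level (j + 1)) (fun s => P.π s * P.K s t) f
            (fun s _ => mul_nonneg (P.π_nonneg s) (P.K_nonneg s t))
          have hcompat : ∑ s ∈ P.level (j + 1), P.π s * P.K s t = P.π t := by
            rw [P.π_compat t (by omega), hrt]
            rfl
          rw [hcompat] at hcs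
          have hnum2 : num ^ 2 ≤ P.π t * ∑ s ∈ P.level (j + 1), P.π s * P.K s t * f s ^ 2 := by
            rw [hnum]
            exact hcs
          rw [hdown, show P.π t * (num / P.π t) * (num / P.π t) = num ^ 2 / P.π t by
            field_simp]
          rw [div_le_iff₀ hπpos]
          calc num ^ 2 ≤ P.π t * ∑ s ∈ P.level (j + 1), P.π s * P.K s t * f s ^ 2 := hnum2
            _ = (∑ s ∈ P.level (j + 1), P.π s * P.K s t * f s ^ 2) * P.π t := by ring
    _ = ∑ s ∈ P.level (j + 1), (∑ t ∈ P.level j, P.K s t) * (P.π s * f s ^ 2) := by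
        rw [Finset.sum_comm]
        refine Finset.sum_congr rfl fun s _ => ?_
        rw [Finset.sum_mul]
        exact Finset.sum_congr rfl fun t _ => by ring
    _ ≤ ∑ s ∈ P.level (j + 1), P.π s * f s * f s := by
        refine Finset.sum_le_sum fun s hs => ?_
        rw [MeasuredPoset.level, Finset.mem_filter] at hs
        have hK1 : ∑ t ∈ P.level j, P.K s t ≤ 1 := by
          rw [← P.K_sum s (by omega)]
          exact Finset.sum_le_sum_of_subset_of_nonneg (Finset.filter_subset _ _)
            (fun t _ _ => P.K_nonneg s t)
        have hX : (0:ℝ) ≤ P.π s * f s ^ 2 := by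
          have := P.π_nonneg s; positivity
        calc (∑ t ∈ P.level j, P.K s t) * (P.π s * f s ^ 2)
            ≤ 1 * (P.π s * f s ^ 2) := mul_le_mul_of_nonneg_right hK1 hX
          _ = P.π s * f s * f s := by ring

lemma down_contract (P : MeasuredPoset α k) {j : ℕ} (hj : j ≤ k) (f : α → ℝ) :
    ‖E P j (P.down f)‖ ≤ ‖E P (j + 1) f‖ :=
  norm_E_le_of_ip P (ip_down_le P hj f)

lemma adj (P : MeasuredPoset α k) {j : ℕ} (hj : j ≤ k) (f : α → ℝ) {g : α → ℝ}
    (hg : Supp P j g) : P.ip (j + 1) f (P.up g) = P.ip j (P.down f) g := by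
  unfold MeasuredPoset.ip
  calc ∑ s ∈ P.level (j + 1), P.π s * f s * P.up g s
      = ∑ s ∈ P.level (j + 1), ∑ t : α, P.π s * f s * (P.K s t * g t) := by
        refine Finset.sum_congr rfl fun s _ => ?_
        unfold MeasuredPoset.up
        rw [Finset.mul_sum]
    _ = ∑ t : α, ∑ s ∈ P.level (j + 1), P.π s * f s * (P.K s t * g t) :=
        by rw [Finset.sum_comm]
    _ = ∑ t : α, if P.rank t = j then P.π t * P.down f t * g t else 0 := by
        refine Finset.sum_congr rfl fun t _ => ?_
        by_cases hrt : P.rank t = j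
        · rw [if_pos hrt]
          have hlev : P.level (P.rank t + 1) = P.level (j + 1) := by rw [hrt]
          set num := ∑ s ∈ P.level (j + 1), P.π s * P.K s t * f s with hnum
          have hdown : P.down f t = num / P.π t := by
            unfold MeasuredPoset.down
            rw [hlev]
          have hL : ∑ s ∈ P.level (j + 1), P.π s * f s * (P.K s t * g t) = num * g t := by
            rw [hnum, Finset.sum_mul]
            exact Finset.sum_congr rfl fun s _ => by ring
          rw [hL, hdown]
          by_cases hπ : P.π t = 0
          · have hcompat : ∑ s ∈ P.level (j + 1), P.π s * P.K s t = P.π t := by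
              rw [P.π_compat t (by omega), hrt]
              rfl
            have hzero : ∀ s ∈ P.level (j + 1), P.π s * P.K s t = 0 := by
              rw [← Finset.sum_eq_zero_iff_of_nonneg
                (fun s _ => mul_nonneg (P.π_nonneg s) (P.K_nonneg s t))]
              rw [hcompat, hπ]
            have : num = 0 := Finset.sum_eq_zero fun s hs => by
              rw [hzero s hs, zero_mul]
            rw [this, hπ]
            ring
          · rw [mul_div_cancel₀ _ hπ]
        · rw [if_neg hrt, hg t hrt]
          refine Finset.sum_eq_zero fun s _ => by ring
    _ = ∑ t ∈ P.level j, P.π t * P.down f t * g t := by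
        rw [MeasuredPoset.level, Finset.sum_filter]

lemma defect_bound (P : MeasuredPoset α k) {r δ : ℕ → ℝ} {γ : ℝ} (hγ : 0 ≤ γ)
    (hEpo : P.IsEposet r δ γ) {j : ℕ} (hj : j + 1 ≤ k) (f : α → ℝ) :
    ‖E P (j + 1) (P.eposetDefect r δ j f)‖ ≤ γ * ‖E P (j + 1) f‖ := by
  have h := hEpo j hj f
  rw [ip_eq, ip_eq, real_inner_self_eq_norm_sq, real_inner_self_eq_norm_sq] at h
  have h2 : ‖E P (j + 1) (P.eposetDefect r δ j f)‖ ^ 2 ≤ (γ * ‖E P (j + 1) f‖) ^ 2 := by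
    rw [mul_pow]; exact h
  have := Real.sqrt_le_sqrt h2
  rwa [Real.sqrt_sq (norm_nonneg _), Real.sqrt_sq (by positivity)] at this

end ApproxOrtho
namespace ApproxOrtho

open MeasuredPoset

variable {α : Type} [Fintype α] [PartialOrder α] {k : ℕ}

/-- `m`-fold iterate of the down operator. -/
def downIter (P : MeasuredPoset α k) : ℕ → (α → ℝ) → (α → ℝ)
  | 0, f => f
  | (m + 1), f => P.down (downIter P m f)

lemma downIter_succ' (P : MeasuredPoset α k) (m : ℕ) (f : α → ℝ) :
    downIter P (m + 1) f = downIter P m (P.down f) := by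
  induction m with
  | zero => rfl
  | succ m ih =>
      show P.down (downIter P (m + 1) f) = P.down (downIter P m (P.down f))
      rw [ih]

lemma downIter_add (P : MeasuredPoset α k) (p q : ℕ) (f : α → ℝ) :
    downIter P (p + q) f = downIter P p (downIter P q f) := by
  induction p with
  | zero => rw [Nat.zero_add]; rfl
  | succ p ih =>
      rw [show p + 1 + q = (p + q) + 1 by omega]
      show P.down (downIter P (p + q) f) = P.down (downIter P p (downIter P q f))
      rw [ih]

lemma supp_zero_fn (P : MeasuredPoset α k) (j : ℕ) : Supp P j (0 : α → ℝ) :=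
  fun _ _ => rfl

lemma downIter_contract (P : MeasuredPoset α k) (hk : k ≤ k) :
    ∀ (i p : ℕ) (f : α → ℝ), i ≤ p → p ≤ k + 1 →
      ‖E P (p - i) (downIter P i f)‖ ≤ ‖E P p f‖ := by
  intro i
  induction i with
  | zero => intro p f _ _; exact le_of_eq rfl
  | succ i ih =>
      intro p f hip hpk
      have h1 : ‖E P (p - i - 1) (P.down (downIter P i f))‖ ≤ ‖E P (p - i - 1 + 1) (downIter P i f)‖ :=
        down_contract P (by omega) _
      rw [show p - i - 1 + 1 = p - i by omega] at h1
      have h2 := ih p f (by omega) hpk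
      calc ‖E P (p - (i + 1)) (downIter P (i + 1) f)‖
          = ‖E P (p - i - 1) (P.down (downIter P i f))‖ := rfl
        _ ≤ ‖E P (p - i) (downIter P i f)‖ := h1
        _ ≤ ‖E P p f‖ := h2

lemma upIter_contract (P : MeasuredPoset α k) :
    ∀ (n p : ℕ) (h : α → ℝ), p + n ≤ k + 1 →
      ‖E P (p + n) (P.upIter n h)‖ ≤ ‖E P p h‖ := by
  intro n
  induction n with
  | zero => intro p h _; exact le_of_eq rfl
  | succ n ih =>
      intro p h hpk
      have h1 : ‖E P (p + n + 1) (P.up (P.upIter n h))‖ ≤ ‖E P (p + n) (P.upIter n h)‖ :=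
        up_contract P (by omega) _
      exact le_trans h1 (ih p h (by omega))

lemma adjIter (P : MeasuredPoset α k) :
    ∀ (m p : ℕ) (X h : α → ℝ), Supp P p h → p + m ≤ k + 1 →
      P.ip (p + m) X (P.upIter m h) = P.ip p (downIter P m X) h := by
  intro m
  induction m with
  | zero => intro p X h _ _; rfl
  | succ m ih =>
      intro p X h hh hpk
      have h1 : P.ip (p + m + 1) X (P.up (P.upIter m h)) = P.ip (p + m) (P.down X) (P.upIter m h) :=
        adj P (by omega) X (supp_upIter P hh m)
      have h2 := ih p (P.down X) h hh (by omega)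
      rw [show p + (m + 1) = p + m + 1 by omega]
      show P.ip (p + m + 1) X (P.up (P.upIter m h)) = _
      rw [h1, h2, ← downIter_succ']

end ApproxOrtho
namespace ApproxOrtho

open MeasuredPoset

variable {α : Type} [Fintype α] [PartialOrder α] {k : ℕ}

/-- A constant dominating `2`, `|r j|` and `|δ j|` for all relevant `j`. -/
def Mc (k : ℕ) (r δ : ℕ → ℝ) : ℝ := 2 + ∑ j ∈ Finset.range (k + 2), (|r j| + |δ j|)

lemma two_le_Mc (k : ℕ) (r δ : ℕ → ℝ) : 2 ≤ Mc k r δ := by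
  have : (0:ℝ) ≤ ∑ j ∈ Finset.range (k + 2), (|r j| + |δ j|) :=
    Finset.sum_nonneg fun j _ => by positivity
  unfold Mc; linarith

lemma abs_r_le_Mc (k : ℕ) (r δ : ℕ → ℝ) {j : ℕ} (hj : j ≤ k + 1) : |r j| ≤ Mc k r δ := by
  have h1 : |r j| + |δ j| ≤ ∑ i ∈ Finset.range (k + 2), (|r i| + |δ i|) :=
    Finset.single_le_sum (f := fun i => |r i| + |δ i|)
      (fun i _ => add_nonneg (abs_nonneg _) (abs_nonneg _)) (Finset.mem_range.2 (by omega))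
  have h2 : (0:ℝ) ≤ |δ j| := abs_nonneg _
  unfold Mc; linarith

lemma abs_δ_le_Mc (k : ℕ) (r δ : ℕ → ℝ) {j : ℕ} (hj : j ≤ k + 1) : |δ j| ≤ Mc k r δ := by
  have h1 : |r j| + |δ j| ≤ ∑ i ∈ Finset.range (k + 2), (|r i| + |δ i|) :=
    Finset.single_le_sum (f := fun i => |r i| + |δ i|)
      (fun i _ => add_nonneg (abs_nonneg _) (abs_nonneg _)) (Finset.mem_range.2 (by omega))
  have h2 : (0:ℝ) ≤ |r j| := abs_nonneg _
  unfold Mc; linarith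

lemma upIter_succ_eq (P : MeasuredPoset α k) (n : ℕ) (g : α → ℝ) :
    P.upIter (n + 1) g = P.up (P.upIter n g) := rfl

lemma lemC (P : MeasuredPoset α k) (r δ : ℕ → ℝ) {γ : ℝ} (hγ : 0 ≤ γ)
    (hEpo : P.IsEposet r δ γ) :
    ∀ (q b : ℕ) (h : α → ℝ), 1 ≤ b → Supp P b h → P.down h = 0 → b + q + 1 ≤ k →
      ∃ R : ℝ, |R| ≤ Mc k r δ ^ (2 * q + 2) ∧
        ‖E P (b + q) (fun x => P.down (P.upIter (q + 1) h) x - R * P.upIter q h x)‖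
          ≤ Mc k r δ ^ (2 * q + 2) * (γ * ‖E P b h‖) := by
  intro q
  set m := Mc k r δ with hm
  have hm2 : 2 ≤ m := two_le_Mc k r δ
  have hm1 : (1:ℝ) ≤ m := by linarith
  induction q with
  | zero =>
      intro b h hb hsupp hdh hbk
      obtain ⟨b', rfl⟩ : ∃ b', b = b' + 1 := ⟨b - 1, by omega⟩
      have hpow : m ^ (2 * 0 + 2) = m ^ 2 := by norm_num
      refine ⟨r b', ?_, ?_⟩
      · rw [hpow]
        calc |r b'| ≤ m := abs_r_le_Mc k r δ (by omega)
          _ ≤ m ^ 2 := by nlinarith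
      · have hfn : (fun x => P.down (P.upIter (0 + 1) h) x - r b' * P.upIter 0 h x)
            = P.eposetDefect r δ b' h := by
          funext x
          show P.down (P.up h) x - r b' * h x = _
          unfold MeasuredPoset.eposetDefect
          rw [hdh, up_zero]
          simp
        have hbd : ‖E P (b' + 1) (P.eposetDefect r δ b' h)‖ ≤ γ * ‖E P (b' + 1) h‖ :=
          defect_bound P hγ hEpo (by omega) h
        rw [show b' + 1 + 0 = b' + 1 by omega, hfn, hpow]
        have h1 : (1:ℝ) ≤ m ^ 2 := by nlinarith
        have h2 : 0 ≤ γ * ‖E P (b' + 1) h‖ := by positivity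
        nlinarith
  | succ q ih =>
      intro b h hb hsupp hdh hbk
      obtain ⟨R, hR, herr⟩ := ih b h hb hsupp hdh (by omega)
      have hrb : |r (b + q)| ≤ m := abs_r_le_Mc k r δ (by omega)
      have hδb : |δ (b + q)| ≤ m := abs_δ_le_Mc k r δ (by omega)
      have hX : (1:ℝ) ≤ m ^ (2 * q + 2) := one_le_pow₀ hm1
      have hXnn : (0:ℝ) ≤ m ^ (2 * q + 2) := by linarith
      have epow : m ^ (2 * (q + 1) + 2) = m ^ (2 * q + 2) * m ^ 2 := by
        rw [show 2 * (q + 1) + 2 = (2 * q + 2) + 2 by omega, pow_add]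
      refine ⟨r (b + q) + δ (b + q) * R, ?_, ?_⟩
      · have h1 : |r (b + q) + δ (b + q) * R| ≤ m + m * m ^ (2 * q + 2) := by
          calc |r (b + q) + δ (b + q) * R| ≤ |r (b + q)| + |δ (b + q)| * |R| := by
                rw [← abs_mul]; exact abs_add_le _ _
            _ ≤ m + m * m ^ (2 * q + 2) := by
                have := abs_nonneg R
                have := abs_nonneg (δ (b + q))
                nlinarith
        rw [epow]
        have t1 : m * 1 ≤ m * m ^ (2 * q + 2) :=
          mul_le_mul_of_nonneg_left hX (by linarith)
        have t2 : 2 * (m * m ^ (2 * q + 2)) ≤ m * (m * m ^ (2 * q + 2)) := by nlinarith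
        have t3 : m ^ (2 * q + 2) * m ^ 2 = m * (m * m ^ (2 * q + 2)) := by ring
        linarith
      · -- the error bound
        have hidentity :
            (fun x => P.down (P.upIter (q + 1 + 1) h) x
                - (r (b + q) + δ (b + q) * R) * P.upIter (q + 1) h x)
            = fun x => P.eposetDefect r δ (b + q) (P.upIter (q + 1) h) x
                + δ (b + q) *
                  (P.up (fun y => P.down (P.upIter (q + 1) h) y - R * P.upIter q h y) x) := by
          funext x
          rw [up_sub_smul]
          rw [upIter_succ_eq P (q + 1) h]
          unfold MeasuredPoset.eposetDefect
          rw [upIter_succ_eq P q h]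
          ring
        have hlev : b + (q + 1) = b + q + 1 := by omega
        rw [hidentity, E_add_smul]
        set A := γ * ‖E P b h‖ with hA
        have hAnn : 0 ≤ A := by positivity
        have hdefbd : ‖E P (b + (q + 1)) (P.eposetDefect r δ (b + q) (P.upIter (q + 1) h))‖
            ≤ γ * ‖E P (b + (q + 1)) (P.upIter (q + 1) h)‖ := by
          rw [hlev]
          exact defect_bound P hγ hEpo (by omega) _
        have hcontr : ‖E P (b + (q + 1)) (P.upIter (q + 1) h)‖ ≤ ‖E P b h‖ :=
          upIter_contract P (q + 1) b h (by omega)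
        have hdef2 : ‖E P (b + (q + 1)) (P.eposetDefect r δ (b + q) (P.upIter (q + 1) h))‖
            ≤ A := le_trans hdefbd (by rw [hA]; exact mul_le_mul_of_nonneg_left hcontr hγ)
        have hGup : ‖E P (b + (q + 1))
            (P.up (fun y => P.down (P.upIter (q + 1) h) y - R * P.upIter q h y))‖
            ≤ ‖E P (b + q) (fun y => P.down (P.upIter (q + 1) h) y - R * P.upIter q h y)‖ := by
          rw [hlev]
          exact up_contract P (by omega) _
        have hGbd : ‖E P (b + q) (fun y => P.down (P.upIter (q + 1) h) y - R * P.upIter q h y)‖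
            ≤ m ^ (2 * q + 2) * A := herr
        calc ‖E P (b + (q + 1)) (P.eposetDefect r δ (b + q) (P.upIter (q + 1) h))
              + δ (b + q) • E P (b + (q + 1))
                (P.up (fun y => P.down (P.upIter (q + 1) h) y - R * P.upIter q h y))‖
            ≤ ‖E P (b + (q + 1)) (P.eposetDefect r δ (b + q) (P.upIter (q + 1) h))‖
              + ‖δ (b + q) • E P (b + (q + 1))
                (P.up (fun y => P.down (P.upIter (q + 1) h) y - R * P.upIter q h y))‖ :=
              norm_add_le _ _
          _ ≤ A + |δ (b + q)| * (m ^ (2 * q + 2) * A) := by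
              rw [norm_smul, Real.norm_eq_abs]
              exact add_le_add hdef2
                (mul_le_mul_of_nonneg_left (le_trans hGup hGbd) (abs_nonneg _))
          _ ≤ m ^ (2 * (q + 1) + 2) * A := by
              rw [epow]
              have hnn := abs_nonneg (δ (b + q))
              have u1 : |δ (b + q)| * (m ^ (2 * q + 2) * A) ≤ m * (m ^ (2 * q + 2) * A) :=
                mul_le_mul_of_nonneg_right hδb (mul_nonneg hXnn hAnn)
              have u2 : A * 1 ≤ A * (m * m ^ (2 * q + 2)) := mul_le_mul_of_nonneg_left (by nlinarith) hAnn
              have u3 : m ^ (2 * q + 2) * m ^ 2 * A = m * (m * (m ^ (2 * q + 2) * A)) := by ring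
              have u0 : (0:ℝ) ≤ m * (m ^ (2 * q + 2) * A) :=
                mul_nonneg (by linarith) (mul_nonneg hXnn hAnn)
              nlinarith [u0]
  
end ApproxOrtho
namespace ApproxOrtho

open MeasuredPoset

variable {α : Type} [Fintype α] [PartialOrder α] {k : ℕ}

lemma E_zero_fn (P : MeasuredPoset α k) (j : ℕ) : E P j (fun _ => (0:ℝ)) = 0 := by
  ext x
  simp [E]

lemma lemA (P : MeasuredPoset α k) (r δ : ℕ → ℝ) {γ : ℝ} (hγ : 0 ≤ γ)
    (hEpo : P.IsEposet r δ γ) :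
    ∀ (i n b : ℕ) (h : α → ℝ), i ≤ n → 1 ≤ b → Supp P b h → P.down h = 0 → b + n ≤ k →
      ∃ ρ : ℝ, |ρ| ≤ (Mc k r δ ^ (2 * k + 2)) ^ i ∧
        ‖E P (b + n - i)
            (fun x => downIter P i (P.upIter n h) x - ρ * P.upIter (n - i) h x)‖
          ≤ (i : ℝ) * (Mc k r δ ^ (2 * k + 2)) ^ i * (γ * ‖E P b h‖) := by
  intro i
  set m := Mc k r δ with hm
  have hm2 : 2 ≤ m := two_le_Mc k r δ
  have hm1 : (1:ℝ) ≤ m := by linarith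
  set B := m ^ (2 * k + 2) with hB
  have hB1 : (1:ℝ) ≤ B := one_le_pow₀ hm1
  induction i with
  | zero =>
      intro n b h _ hb hsupp hdh hbk
      refine ⟨1, by simp, ?_⟩
      have hfn : (fun x => downIter P 0 (P.upIter n h) x - 1 * P.upIter (n - 0) h x)
          = fun _ => (0:ℝ) := by
        funext x
        show P.upIter n h x - 1 * P.upIter n h x = 0
        ring
      rw [hfn, E_zero_fn, norm_zero]
      simp
  | succ i ih =>
      intro n b h hin hb hsupp hdh hbk
      obtain ⟨ρ, hρ, herr⟩ := ih n b h (by omega) hb hsupp hdh hbk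
      obtain ⟨R, hR, hCerr⟩ := lemC P r δ hγ hEpo (n - i - 1) b h hb hsupp hdh (by omega)
      rw [show n - i - 1 + 1 = n - i by omega] at hCerr
      rw [show b + (n - i - 1) = b + n - (i + 1) by omega] at hCerr
      have hexp : m ^ (2 * (n - i - 1) + 2) ≤ B :=
        pow_le_pow_right₀ hm1 (by omega)
      set A := γ * ‖E P b h‖ with hA
      have hAnn : 0 ≤ A := by positivity
      have hBi : (0:ℝ) < B ^ i := by positivity
      refine ⟨ρ * R, ?_, ?_⟩
      · rw [abs_mul, pow_succ]
        exact mul_le_mul hρ (le_trans hR hexp) (abs_nonneg _) (by positivity)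
      · have hfn : (fun x => downIter P (i + 1) (P.upIter n h) x
              - ρ * R * P.upIter (n - (i + 1)) h x)
            = fun x => (P.down (fun y => downIter P i (P.upIter n h) y
                  - ρ * P.upIter (n - i) h y)) x
                + ρ * ((fun y => P.down (P.upIter (n - i) h) y
                  - R * P.upIter (n - i - 1) h y) x) := by
          funext x
          have hd := congrFun
            (down_sub_smul P ρ (downIter P i (P.upIter n h)) (P.upIter (n - i) h)) x
          rw [hd]
          show P.down (downIter P i (P.upIter n h)) x
              - ρ * R * P.upIter (n - i - 1) h x = _
          ring
        rw [hfn, E_add_smul]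
        have hdc : ‖E P (b + n - (i + 1))
            (P.down (fun y => downIter P i (P.upIter n h) y - ρ * P.upIter (n - i) h y))‖
            ≤ ‖E P (b + n - (i + 1) + 1)
            (fun y => downIter P i (P.upIter n h) y - ρ * P.upIter (n - i) h y)‖ :=
          down_contract P (by omega) _
        rw [show b + n - (i + 1) + 1 = b + n - i by omega] at hdc
        have h1 : ‖E P (b + n - (i + 1))
            (P.down (fun y => downIter P i (P.upIter n h) y - ρ * P.upIter (n - i) h y))‖
            ≤ (i : ℝ) * B ^ i * A := le_trans hdc herr
        have h2 : ‖E P (b + n - (i + 1))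
            (fun y => P.down (P.upIter (n - i) h) y - R * P.upIter (n - i - 1) h y)‖
            ≤ B * A := le_trans hCerr (mul_le_mul_of_nonneg_right hexp hAnn)
        calc ‖E P (b + n - (i + 1))
              (P.down (fun y => downIter P i (P.upIter n h) y - ρ * P.upIter (n - i) h y))
              + ρ • E P (b + n - (i + 1))
              (fun y => P.down (P.upIter (n - i) h) y - R * P.upIter (n - i - 1) h y)‖
            ≤ ‖E P (b + n - (i + 1))
              (P.down (fun y => downIter P i (P.upIter n h) y - ρ * P.upIter (n - i) h y))‖
              + |ρ| * ‖E P (b + n - (i + 1))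
              (fun y => P.down (P.upIter (n - i) h) y - R * P.upIter (n - i - 1) h y)‖ := by
              rw [← Real.norm_eq_abs, ← norm_smul]
              exact norm_add_le _ _
          _ ≤ (i : ℝ) * B ^ i * A + B ^ i * (B * A) := by
              have := mul_le_mul hρ h2 (norm_nonneg _) (le_of_lt hBi)
              linarith
          _ ≤ (↑(i + 1) : ℝ) * B ^ (i + 1) * A := by
              push_cast
              have e1 : (i : ℝ) * B ^ i * A ≤ (i : ℝ) * B ^ (i + 1) * A := by
                have hle : B ^ i ≤ B ^ (i + 1) := pow_le_pow_right₀ hB1 (by omega)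
                have hi : (0:ℝ) ≤ (i:ℝ) := Nat.cast_nonneg i
                exact mul_le_mul_of_nonneg_right (mul_le_mul_of_nonneg_left hle hi) hAnn
              have e2 : B ^ i * (B * A) = B ^ (i + 1) * A := by rw [pow_succ]; ring
              nlinarith
  
end ApproxOrtho
namespace ApproxOrtho

open MeasuredPoset

variable {α : Type} [Fintype α] [PartialOrder α] {k : ℕ}

lemma harmonic_down_zero (P : MeasuredPoset α k) {j : ℕ} (hj : 1 ≤ j) {h : α → ℝ}
    (hh : P.Harmonic j h) : P.down h = 0 := by
  funext t
  show P.down h t = 0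
  by_cases ht : P.rank t = j - 1
  · exact hh.2 hj t (Finset.mem_filter.2 ⟨Finset.mem_univ t, ht⟩)
  · have hsupp : Supp P ((j - 1) + 1) h := by
      rw [show j - 1 + 1 = j by omega]
      exact fun x hx => hh.1 x hx
    exact supp_down P hsupp t ht

lemma lemE (P : MeasuredPoset α k) (r δ : ℕ → ℝ) {γ : ℝ} (hγ : 0 ≤ γ)
    (hEpo : P.IsEposet r δ γ) {ℓ a b : ℕ} (hℓ : ℓ + 1 ≤ k) (hab : a < b)
    (hbl : b ≤ ℓ + 1) (ha hb : α → ℝ) (hsa : Supp P a ha) (hsb : Supp P b hb)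
    (hdb : P.down hb = 0) :
    |P.ip (ℓ + 1) (P.upIter (ℓ + 1 - a) ha) (P.upIter (ℓ + 1 - b) hb)|
      ≤ ((k + 1 : ℝ) * (Mc k r δ ^ (2 * k + 2)) ^ (k + 1) + 1) * γ
          * ‖E P a ha‖ * ‖E P b hb‖ := by
  set m := Mc k r δ with hm
  have hm2 : 2 ≤ m := two_le_Mc k r δ
  have hm1 : (1:ℝ) ≤ m := by linarith
  set B := m ^ (2 * k + 2) with hB
  have hB1 : (1:ℝ) ≤ B := one_le_pow₀ hm1
  set n := ℓ + 1 - b with hn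
  set m' := ℓ + 1 - a with hm'
  set X := P.upIter n hb with hX
  -- adjointness
  have hadj := adjIter P m' a X ha hsa (by omega)
  rw [show a + m' = ℓ + 1 by omega] at hadj
  -- main estimate on `D^{m'} X`
  obtain ⟨ρ, hρ, herr⟩ := lemA P r δ hγ hEpo n n b hb le_rfl (by omega) hsb hdb (by omega)
  rw [show b + n - n = b by omega, show n - n = 0 by omega] at herr
  set A := γ * ‖E P b hb‖ with hA
  have hAnn : 0 ≤ A := by positivity
  have h5 : ‖E P (b - 1) (downIter P (n + 1) X)‖ ≤ (n : ℝ) * B ^ n * A := by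
    have hup0 : P.upIter 0 hb = hb := rfl
    have hfn : P.down (fun x => downIter P n X x - ρ * P.upIter 0 hb x)
        = downIter P (n + 1) X := by
      rw [hup0, down_sub_smul, hdb]
      funext t
      show P.down (downIter P n X) t - ρ * (0 : α → ℝ) t = P.down (downIter P n X) t
      simp
    have hdc := down_contract P (j := b - 1) (by omega)
      (fun x => downIter P n X x - ρ * P.upIter 0 hb x)
    rw [hfn, show b - 1 + 1 = b by omega] at hdc
    exact le_trans hdc herr
  have h7 := downIter_contract P le_rfl (m' - (n + 1)) (b - 1) (downIter P (n + 1) X)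
    (by omega) (by omega)
  rw [← downIter_add, show m' - (n + 1) + (n + 1) = m' by omega,
    show b - 1 - (m' - (n + 1)) = a by omega] at h7
  have s2 : ‖E P a (downIter P m' X)‖ ≤ (n : ℝ) * B ^ n * A := le_trans h7 h5
  have hnb : (n : ℝ) * B ^ n ≤ (k + 1 : ℝ) * B ^ (k + 1) + 1 := by
    have c1 : (n : ℝ) ≤ (k + 1 : ℝ) := by
      have : n ≤ k + 1 := by omega
      exact_mod_cast this
    have c2 : B ^ n ≤ B ^ (k + 1) := pow_le_pow_right₀ hB1 (by omega)
    have c3 : (0:ℝ) ≤ B ^ n := by positivity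
    have c4 : (0:ℝ) ≤ (k:ℝ) + 1 := by positivity
    nlinarith [mul_le_mul_of_nonneg_right c1 c3, mul_le_mul_of_nonneg_left c2 c4]
  have hprodγ : 0 ≤ γ * ‖E P a ha‖ * ‖E P b hb‖ := by positivity
  calc |P.ip (ℓ + 1) (P.upIter m' ha) X|
      = |P.ip a (downIter P m' X) ha| := by rw [ip_comm, hadj]
    _ ≤ ‖E P a (downIter P m' X)‖ * ‖E P a ha‖ := abs_ip_le P a _ ha
    _ ≤ ((n : ℝ) * B ^ n * A) * ‖E P a ha‖ :=
        mul_le_mul_of_nonneg_right s2 (norm_nonneg _)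
    _ = ((n : ℝ) * B ^ n) * (γ * ‖E P a ha‖ * ‖E P b hb‖) := by rw [hA]; ring
    _ ≤ ((k + 1 : ℝ) * B ^ (k + 1) + 1) * (γ * ‖E P a ha‖ * ‖E P b hb‖) :=
        mul_le_mul_of_nonneg_right hnb hprodγ
    _ = ((k + 1 : ℝ) * B ^ (k + 1) + 1) * γ * ‖E P a ha‖ * ‖E P b hb‖ := by ring

end ApproxOrtho

theorem approximate_orthogonality' (k : ℕ) (r δ : ℕ → ℝ) :
    ∃ C : ℝ, 0 < C ∧
      ∀ (α : Type) [Fintype α] [PartialOrder α],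
        ∀ (P : MeasuredPoset α k) (γ : ℝ), 0 ≤ γ → P.IsEposet r δ γ →
        ∀ ℓ : ℕ, ℓ + 1 ≤ k → ∀ a b : ℕ, a ≠ b → a ≤ ℓ + 1 → b ≤ ℓ + 1 →
        ∀ ha hb : α → ℝ, P.Harmonic a ha → P.Harmonic b hb →
          |P.ip (ℓ + 1) (P.upIter (ℓ + 1 - a) ha) (P.upIter (ℓ + 1 - b) hb)|
            ≤ C * γ * Real.sqrt (P.ip a ha ha) * Real.sqrt (P.ip b hb hb) := by
  classical
  refine ⟨(k + 1 : ℝ) * (ApproxOrtho.Mc k r δ ^ (2 * k + 2)) ^ (k + 1) + 1, ?_, ?_⟩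
  · have hm2 := ApproxOrtho.two_le_Mc k r δ
    have h1 : (0:ℝ) ≤ (k + 1 : ℝ) * (ApproxOrtho.Mc k r δ ^ (2 * k + 2)) ^ (k + 1) := by
      positivity
    linarith
  · intro α _ _ P γ hγ hEpo ℓ hℓ a b hab hal hbl ha hb hha hhb
    have hsa : ApproxOrtho.Supp P a ha := fun x hx => hha.1 x hx
    have hsb : ApproxOrtho.Supp P b hb := fun x hx => hhb.1 x hx
    rw [ApproxOrtho.sqrt_ip, ApproxOrtho.sqrt_ip]
    rcases hab.lt_or_gt with hlt | hlt
    · have hdb : P.down hb = 0 := ApproxOrtho.harmonic_down_zero P (by omega) hhb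
      exact ApproxOrtho.lemE P r δ hγ hEpo hℓ hlt hbl ha hb hsa hsb hdb
    · have hda : P.down ha = 0 := ApproxOrtho.harmonic_down_zero P (by omega) hha
      have := ApproxOrtho.lemE P r δ hγ hEpo hℓ hlt hal hb ha hsb hsa hda
      calc |P.ip (ℓ + 1) (P.upIter (ℓ + 1 - a) ha) (P.upIter (ℓ + 1 - b) hb)|
          = |P.ip (ℓ + 1) (P.upIter (ℓ + 1 - b) hb) (P.upIter (ℓ + 1 - a) ha)| := by
            rw [ApproxOrtho.ip_comm]
        _ ≤ ((k + 1 : ℝ) * (ApproxOrtho.Mc k r δ ^ (2 * k + 2)) ^ (k + 1) + 1) * γ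
              * ‖ApproxOrtho.E P b hb‖ * ‖ApproxOrtho.E P a ha‖ := this
        _ = ((k + 1 : ℝ) * (ApproxOrtho.Mc k r δ ^ (2 * k + 2)) ^ (k + 1) + 1) * γ
              * ‖ApproxOrtho.E P a ha‖ * ‖ApproxOrtho.E P b hb‖ := by ring
/-- (Approximate orthogonality.)  In a `k`-dimensional
`(r, δ, γ)`-eposet, for `ℓ < k` and distinct levels (of shifted ranks `a ≠ b`),
if `f_a = U^{ℓ+1-a} h_a` and `f_b = U^{ℓ+1-b} h_b` with `h_a ∈ ker D`,
`h_b ∈ ker D`, then `|⟨f_a, f_b⟩| = O(γ)·‖h_a‖·‖h_b‖`, with the implied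
constant depending only on `k`, `r`, `δ`. -/
theorem approximate_orthogonality (k : ℕ) (r δ : ℕ → ℝ) :
    ∃ C : ℝ, 0 < C ∧
      ∀ (α : Type) [Fintype α] [PartialOrder α],
        ∀ (P : MeasuredPoset α k) (γ : ℝ), 0 ≤ γ → P.IsEposet r δ γ →
        ∀ ℓ : ℕ, ℓ + 1 ≤ k → ∀ a b : ℕ, a ≠ b → a ≤ ℓ + 1 → b ≤ ℓ + 1 →
        ∀ ha hb : α → ℝ, P.Harmonic a ha → P.Harmonic b hb →
          |P.ip (ℓ + 1) (P.upIter (ℓ + 1 - a) ha) (P.upIter (ℓ + 1 - b) hb)|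
            ≤ C * γ * Real.sqrt (P.ip a ha ha) * Real.sqrt (P.ip b hb hb) := by
  exact approximate_orthogonality' k r δ
end
end

section
/- Let X^(m) be a sequence of k-dimensional (r⃗^(m), δ⃗^(m), γ^(m))-eposets with γ^(m) → 0. Then for all j ≤ k−1, r_j^(m) + δ_j^(m) → 1. If moreover the laziness Pr_{(t₁,t₂)~UD}[t₁=t₂] → 0 for each level and D_{j+1}U_j = α_j I + (1−α_j)M⁺ for a non-lazy averaging operator M⁺, then r_j^(m) → α_j and δ_j^(m) → 1 − α_j. -/
open Finset

noncomputable section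

namespace MeasuredPoset

variable {α : Type} [Fintype α] [PartialOrder α] {d : ℕ} (P : MeasuredPoset α d)

lemma mem_level {j : ℕ} {x : α} : x ∈ P.level j ↔ P.rank x = j := by
  simp [level]

lemma π_sum' (j : ℕ) (hj : j ≤ d + 1) : ∑ x ∈ P.level j, P.π x = 1 :=
  P.π_sum j hj

lemma π_compat' (t : α) (ht : P.rank t ≤ d) :
    P.π t = ∑ s ∈ P.level (P.rank t + 1), P.π s * P.K s t :=
  P.π_compat t ht

lemma up_one {s : α} (hs : 1 ≤ P.rank s) : P.up (fun _ => (1:ℝ)) s = 1 := by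
  simp only [up, mul_one]
  exact P.K_sum s hs

lemma down_one {t : α} (ht : P.rank t ≤ d) (hπ : P.π t ≠ 0) :
    P.down (fun _ => (1:ℝ)) t = 1 := by
  simp only [down, mul_one]
  rw [← P.π_compat' t ht]
  exact div_self hπ

lemma down_up_one {x : α} (hx : P.rank x ≤ d) (hπ : P.π x ≠ 0) :
    P.down (P.up (fun _ => (1:ℝ))) x = 1 := by
  simp only [down]
  have hnum : ∑ s ∈ P.level (P.rank x + 1), P.π s * P.K s x * P.up (fun _ => (1:ℝ)) s
      = P.π x := by
    rw [P.π_compat' x hx]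
    refine Finset.sum_congr rfl fun s hs => ?_
    have hr : P.rank s = P.rank x + 1 := P.mem_level.mp hs
    rw [P.up_one (by omega), mul_one]
  rw [hnum, div_self hπ]

lemma up_down_one {x : α} (hx1 : 1 ≤ P.rank x) (hxd : P.rank x ≤ d) (hπ : P.π x ≠ 0) :
    P.up (P.down (fun _ => (1:ℝ))) x = 1 := by
  simp only [up]
  have hterm : ∀ t : α, P.K x t * P.down (fun _ => (1:ℝ)) t = P.K x t := by
    intro t
    by_cases hK : P.K x t = 0
    · simp [hK]
    have hcov := P.K_supp x t hK
    have hr := P.rank_covby t x hcov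
    have htd : P.rank t ≤ d := by omega
    have hπt : P.π t ≠ 0 := by
      intro h0
      have hc : ∑ s ∈ P.level (P.rank t + 1), P.π s * P.K s t = 0 := by
        rw [← P.π_compat' t htd, h0]
      have hz := (Finset.sum_eq_zero_iff_of_nonneg
        (fun s _ => mul_nonneg (P.π_nonneg s) (P.K_nonneg s t))).mp hc
      have hxm : x ∈ P.level (P.rank t + 1) := P.mem_level.mpr hr
      rcases mul_eq_zero.mp (hz x hxm) with h | h
      · exact hπ h
      · exact hK h
    rw [P.down_one htd hπt, mul_one]
  rw [Finset.sum_congr rfl (fun t _ => hterm t)]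
  exact P.K_sum x hx1

lemma laziness_nonneg (j : ℕ) : 0 ≤ P.laziness j := by
  refine Finset.sum_nonneg fun x _ => mul_nonneg (P.π_nonneg x) ?_
  exact Finset.sum_nonneg fun t _ => mul_nonneg (P.K_nonneg x t)
    (div_nonneg (mul_nonneg (P.π_nonneg x) (P.K_nonneg x t)) (P.π_nonneg t))

/-- Applying the eposet inequality to the constant function. -/
lemma const_sq_bound (r δ : ℕ → ℝ) (γ : ℝ) (h : P.IsEposet r δ γ)
    (j : ℕ) (hj : j + 1 ≤ d) : (1 - r j - δ j)^2 ≤ γ^2 := by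
  have key := h j hj (fun _ => 1)
  have hff : P.ip (j+1) (fun _ => (1:ℝ)) (fun _ => 1) = 1 := by
    simp only [ip, mul_one]
    exact P.π_sum' (j+1) (by omega)
  have hD : P.ip (j+1) (P.eposetDefect r δ j (fun _ => 1))
      (P.eposetDefect r δ j (fun _ => 1)) = (1 - r j - δ j)^2 := by
    have hcg : ∀ x ∈ P.level (j+1),
        P.π x * P.eposetDefect r δ j (fun _ => 1) x * P.eposetDefect r δ j (fun _ => 1) x
        = P.π x * (1 - r j - δ j)^2 := by
      intro x hx
      have hr1 : P.rank x = j + 1 := P.mem_level.mp hx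
      by_cases hπ : P.π x = 0
      · simp [hπ]
      · have hdef : P.eposetDefect r δ j (fun _ => 1) x = 1 - r j - δ j := by
          simp only [eposetDefect]
          rw [P.down_up_one (by omega) hπ, P.up_down_one (by omega) (by omega) hπ]
          ring
        rw [hdef]; ring
    rw [ip, Finset.sum_congr rfl hcg, ← Finset.sum_mul, P.π_sum' (j+1) (by omega), one_mul]
  rw [hD, hff, mul_one] at key
  exact key

/-- Applying the eposet inequality to indicator functions of single faces. -/
lemma indicator_sq_bound (r δ : ℕ → ℝ) (γ : ℝ) (h : P.IsEposet r δ γ)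
    (j : ℕ) (hj : j + 1 ≤ d) (a : ℝ) (κ : α → α → ℝ)
    (hκd : ∀ x, κ x x = 0)
    (hdu : ∀ f : α → ℝ, ∀ x ∈ P.level (j+1),
      P.down (P.up f) x = a * f x + (1 - a) * ∑ y, κ x y * f y) :
    (a - r j)^2 ≤ γ^2 + 2*(a - r j)*(δ j)*(P.laziness (j+1)) := by
  classical
  set L : α → ℝ := fun x => ∑ t, P.K x t * (P.π x * P.K x t / P.π t) with hL
  have key : ∀ x₀ ∈ P.level (j+1),
      P.π x₀ * ((a - r j - δ j * L x₀) * (a - r j - δ j * L x₀)) ≤ γ^2 * P.π x₀ := by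
    intro x₀ hx₀
    have hr1 : P.rank x₀ = j + 1 := P.mem_level.mp hx₀
    set f : α → ℝ := fun y => if y = x₀ then 1 else 0 with hf
    have hff : P.ip (j+1) f f = P.π x₀ := by
      rw [ip, Finset.sum_eq_single x₀]
      · simp [hf]
      · intro b _ hb; simp [hf, hb]
      · intro hb; exact absurd hx₀ hb
    have hdu1 : P.down (P.up f) x₀ = a := by
      have hsum0 : ∑ y, κ x₀ y * f y = 0 := by
        apply Finset.sum_eq_zero
        intro y _
        by_cases hy : y = x₀
        · subst hy; simp [hf, hκd]
        · simp [hf, hy]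
      rw [hdu f x₀ hx₀, hsum0]
      simp [hf]
    have hud : P.up (P.down f) x₀ = L x₀ := by
      simp only [up, hL]
      refine Finset.sum_congr rfl fun t _ => ?_
      by_cases hK : P.K x₀ t = 0
      · simp [hK]
      have hcov := P.K_supp x₀ t hK
      have hrt : P.rank x₀ = P.rank t + 1 := P.rank_covby t x₀ hcov
      have hnum : ∑ s ∈ P.level (P.rank t + 1), P.π s * P.K s t * f s
          = P.π x₀ * P.K x₀ t := by
        rw [Finset.sum_eq_single x₀]
        · simp [hf]
        · intro b _ hb; simp [hf, hb]
        · intro hb; exact absurd (P.mem_level.mpr hrt) hb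
      simp only [down]
      rw [hnum]
    have hdef : P.eposetDefect r δ j f x₀ = a - r j - δ j * L x₀ := by
      simp only [eposetDefect]
      rw [hdu1, hud]
      simp [hf]
    have hle := h j hj f
    rw [hff] at hle
    have hsingle : P.π x₀ * P.eposetDefect r δ j f x₀ * P.eposetDefect r δ j f x₀
        ≤ P.ip (j+1) (P.eposetDefect r δ j f) (P.eposetDefect r δ j f) := by
      rw [ip]
      exact Finset.single_le_sum
        (f := fun x => P.π x * P.eposetDefect r δ j f x * P.eposetDefect r δ j f x)
        (fun x _ => by
          show 0 ≤ P.π x * P.eposetDefect r δ j f x * P.eposetDefect r δ j f x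
          rw [mul_assoc]
          exact mul_nonneg (P.π_nonneg x) (mul_self_nonneg _)) hx₀
    rw [hdef] at hsingle
    calc P.π x₀ * ((a - r j - δ j * L x₀) * (a - r j - δ j * L x₀))
        = P.π x₀ * (a - r j - δ j * L x₀) * (a - r j - δ j * L x₀) := by ring
      _ ≤ _ := hsingle.trans hle
  have hsum := Finset.sum_le_sum key
  have h1 : ∑ x ∈ P.level (j+1), P.π x = 1 := P.π_sum' _ (by omega)
  have hlz : ∑ x ∈ P.level (j+1), P.π x * L x = P.laziness (j+1) := by
    simp only [hL, laziness]
  have hexp : ∀ x ∈ P.level (j+1),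
      P.π x * ((a - r j - δ j * L x) * (a - r j - δ j * L x))
      = (a - r j)^2 * P.π x - 2*(a - r j)*(δ j)*(P.π x * L x)
        + (δ j)^2 * (P.π x * (L x * L x)) := by
    intro x _; ring
  rw [Finset.sum_congr rfl hexp] at hsum
  rw [Finset.sum_add_distrib, Finset.sum_sub_distrib, ← Finset.mul_sum, ← Finset.mul_sum,
    ← Finset.mul_sum, h1, hlz, ← Finset.mul_sum, h1] at hsum
  have hS : 0 ≤ ∑ x ∈ P.level (j+1), P.π x * (L x * L x) :=
    Finset.sum_nonneg fun x _ => mul_nonneg (P.π_nonneg x) (mul_self_nonneg _)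
  nlinarith [mul_nonneg (sq_nonneg (δ j)) hS]

end MeasuredPoset

lemma abs_le_of_sq_le_sq'' {x y : ℝ} (hy : 0 ≤ y) (h : x^2 ≤ y^2) : |x| ≤ y := by
  nlinarith [abs_nonneg x, sq_abs x]

/-- For a sequence of `k`-dimensional
`(r⃗^(m), δ⃗^(m), γ^(m))`-eposets with `γ^(m) → 0` (and `δ⃗^(m)` bounded),
`r_j^(m) + δ_j^(m) → 1` for all `j ≤ k-1`.  If moreover the laziness of the
lower walk tends to `0` on each level and `D_{j+1}U_j = α_j I + (1-α_j) M⁺`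
for a non-lazy averaging (Markov) operator `M⁺`, then `r_j^(m) → α_j` and
`δ_j^(m) → 1 - α_j`. -/
theorem eposet_parameters_limit {A : ℕ → Type}
    [∀ m, Fintype (A m)] [∀ m, PartialOrder (A m)] {k : ℕ}
    (P : ∀ m, MeasuredPoset (A m) k)
    (r δ : ℕ → ℕ → ℝ) (γ : ℕ → ℝ) (hγ0 : ∀ m, 0 ≤ γ m)
    (heposet : ∀ m, (P m).IsEposet (r m) (δ m) (γ m))
    (hγ : Filter.Tendsto γ Filter.atTop (nhds 0))
    (hδbd : ∃ B : ℝ, ∀ m j, |δ m j| ≤ B) :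
    (∀ j, j + 1 ≤ k →
      Filter.Tendsto (fun m => r m j + δ m j) Filter.atTop (nhds 1)) ∧
    ((∀ j, j + 1 ≤ k →
        Filter.Tendsto (fun m => (P m).laziness (j + 1)) Filter.atTop (nhds 0)) →
      ∀ a : ℕ → ℝ,
        (∀ m j, j + 1 ≤ k → ∃ κ : A m → A m → ℝ,
          (∀ x y, 0 ≤ κ x y) ∧ (∀ x, κ x x = 0) ∧
          (∀ x ∈ (P m).level (j + 1), ∑ y : A m, κ x y = 1) ∧
          (∀ f : A m → ℝ, ∀ x ∈ (P m).level (j + 1),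
            (P m).down ((P m).up f) x = a j * f x + (1 - a j) * ∑ y : A m, κ x y * f y)) →
        ∀ j, j + 1 ≤ k →
          Filter.Tendsto (fun m => r m j) Filter.atTop (nhds (a j)) ∧
          Filter.Tendsto (fun m => δ m j) Filter.atTop (nhds (1 - a j))) := by
  obtain ⟨B, hB⟩ := hδbd
  have hB0 : (0:ℝ) ≤ B := le_trans (abs_nonneg _) (hB 0 0)
  have habs : ∀ j, j + 1 ≤ k → ∀ m, |r m j + δ m j - 1| ≤ γ m := by
    intro j hj m
    have h1 := (P m).const_sq_bound (r m) (δ m) (γ m) (heposet m) j hj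
    have h2 : |1 - r m j - δ m j| ≤ γ m := abs_le_of_sq_le_sq'' (hγ0 m) h1
    rw [show r m j + δ m j - 1 = -(1 - r m j - δ m j) by ring, abs_neg]
    exact h2
  have part1 : ∀ j, j + 1 ≤ k →
      Filter.Tendsto (fun m => r m j + δ m j) Filter.atTop (nhds 1) := by
    intro j hj
    have h0 : Filter.Tendsto (fun m => r m j + δ m j - 1) Filter.atTop (nhds 0) :=
      squeeze_zero_norm (fun m => habs j hj m) hγ
    have h1 := h0.add_const 1
    simpa using h1
  refine ⟨part1, ?_⟩
  intro hlaz a hM j hj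
  have hkey : ∀ m, (a j - r m j)^2
      ≤ (γ m)^2 + 2*(a j - r m j)*(δ m j)*((P m).laziness (j+1)) := by
    intro m
    obtain ⟨κ, hκ0, hκd, hκs, hκdu⟩ := hM m j hj
    exact (P m).indicator_sq_bound (r m) (δ m) (γ m) (heposet m) j hj (a j) κ hκd hκdu
  have hc2 : ∀ m, (a j - r m j)^2
      ≤ (γ m)^2 + 2*(|a j| + 1 + B + γ m)*B*((P m).laziness (j+1)) := by
    intro m
    have hlaz0 := (P m).laziness_nonneg (j+1)
    have hbound : (a j - r m j) * δ m j * ((P m).laziness (j+1))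
        ≤ (|a j| + 1 + B + γ m) * B * ((P m).laziness (j+1)) := by
      apply mul_le_mul_of_nonneg_right _ hlaz0
      calc (a j - r m j) * δ m j ≤ |(a j - r m j) * δ m j| := le_abs_self _
        _ = |a j - r m j| * |δ m j| := abs_mul _ _
        _ ≤ (|a j| + 1 + B + γ m) * B := by
            apply mul_le_mul _ (hB m j) (abs_nonneg _) _
            · have h2 := abs_le.mp (habs j hj m)
              have h3 := abs_le.mp (hB m j)
              have h4 := le_abs_self (a j)
              have h5 := neg_abs_le (a j)
              refine abs_le.mpr ⟨by linarith [h2.1, h2.2, h3.1, h3.2], ?_⟩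
              linarith [h2.1, h2.2, h3.1, h3.2]
            · have := abs_nonneg (a j)
              have := hγ0 m
              linarith
    have := hkey m
    linarith
  have hg : Filter.Tendsto
      (fun m => (γ m)^2 + 2*(|a j| + 1 + B + γ m)*B*((P m).laziness (j+1)))
      Filter.atTop (nhds 0) := by
    have hγ2 : Filter.Tendsto (fun m => (γ m)^2) Filter.atTop (nhds 0) := by
      have := hγ.pow 2
      simpa using this
    have hrest : Filter.Tendsto
        (fun m => 2*(|a j| + 1 + B + γ m)*B*((P m).laziness (j+1)))
        Filter.atTop (nhds 0) := by
      have hcoef : Filter.Tendsto (fun m => 2*(|a j| + 1 + B + γ m)*B)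
          Filter.atTop (nhds (2*(|a j| + 1 + B + 0)*B)) :=
        ((hγ.const_add (|a j| + 1 + B)).const_mul 2).mul_const B
      have := hcoef.mul (hlaz j hj)
      simpa using this
    have := hγ2.add hrest
    simpa using this
  have hnorm : ∀ m, ‖a j - r m j‖ ≤ Real.sqrt
      ((γ m)^2 + 2*(|a j| + 1 + B + γ m)*B*((P m).laziness (j+1))) := by
    intro m
    rw [Real.norm_eq_abs, ← Real.sqrt_sq_eq_abs]
    exact Real.sqrt_le_sqrt (hc2 m)
  have hsqrt : Filter.Tendsto (fun m => Real.sqrt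
      ((γ m)^2 + 2*(|a j| + 1 + B + γ m)*B*((P m).laziness (j+1))))
      Filter.atTop (nhds 0) := by
    have := (Real.continuous_sqrt.tendsto 0).comp hg
    simpa [Function.comp_def] using this
  have hc0 : Filter.Tendsto (fun m => a j - r m j) Filter.atTop (nhds 0) :=
    squeeze_zero_norm hnorm hsqrt
  have hr : Filter.Tendsto (fun m => r m j) Filter.atTop (nhds (a j)) := by
    have h1 := (tendsto_const_nhds (x := a j) (f := Filter.atTop (α := ℕ))).sub hc0
    simpa using h1
  refine ⟨hr, ?_⟩
  have h2 := (part1 j hj).sub hr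
  simpa using h2
end
end
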